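/- arXiv:1107.2105 — 5 statements merged into one kernel-verified Lean document; each statement's English description precedes it below -/
import Mathlib

section
/- (Necessity direction of Lemma 1.) Every optimal feasible solution of the energy-minimization convex program satisfies properties (P2)–(P5). -/
open Finset

/-- A feasible solution of the energy-minimization convex program:
speeds `s i > 0`, times `t i j ≥ 0`, `t i j = 0` for jobs not alive in interval `j`,
each job gets enough processing time `w i / s i`, the machine capacity
`min m (a j) * |I j|` is respected in each interval, and `t i j ≤ |I j|`. -/
def EFeasible {n L : ℕ} (m : ℕ) (w : Fin n → ℝ) (len : Fin L → ℝ)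
    (Alive : Fin n → Fin L → Bool)
    (s : Fin n → ℝ) (t : Fin n → Fin L → ℝ) : Prop :=
  (∀ i, 0 < s i) ∧
  (∀ i j, 0 ≤ t i j) ∧
  (∀ i j, ¬ Alive i j → t i j = 0) ∧
  (∀ i, w i / s i ≤ ∑ j ∈ univ.filter (fun j => Alive i j), t i j) ∧
  (∀ j, ∑ i ∈ univ.filter (fun i => Alive i j), t i j
      ≤ ((min m (univ.filter (fun i => Alive i j)).card : ℕ) : ℝ) * len j) ∧
  (∀ i j, t i j ≤ len j)

/-- The energy `∑ i, w i * s i ^ (α - 1)` of a solution. -/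
noncomputable def Energy {n : ℕ} (α : ℝ) (w s : Fin n → ℝ) : ℝ :=
  ∑ i, w i * s i ^ (α - 1)

/-- (P2): if `i` is alive in `j` with `t i j = 0`, then `s i ≤ s k` for every
`k` alive in `j` with `t k j > 0`. -/
def P2 {n L : ℕ} (Alive : Fin n → Fin L → Bool) (s : Fin n → ℝ)
    (t : Fin n → Fin L → ℝ) : Prop :=
  ∀ i j, Alive i j → t i j = 0 → ∀ k, Alive k j → 0 < t k j → s i ≤ s k

/-- (P3): if `t i j = |I j|`, then `s i ≥ s k` for every `k` alive in `j`
with `t k j < |I j|`. -/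
def P3 {n L : ℕ} (len : Fin L → ℝ) (Alive : Fin n → Fin L → Bool) (s : Fin n → ℝ)
    (t : Fin n → Fin L → ℝ) : Prop :=
  ∀ i j, Alive i j → t i j = len j → ∀ k, Alive k j → t k j < len j → s k ≤ s i

/-- (P4): any two jobs alive in `j` with `0 < t · j < |I j|` have equal speeds. -/
def P4 {n L : ℕ} (len : Fin L → ℝ) (Alive : Fin n → Fin L → Bool) (s : Fin n → ℝ)
    (t : Fin n → Fin L → ℝ) : Prop :=
  ∀ i k j, Alive i j → Alive k j → 0 < t i j → t i j < len j →
    0 < t k j → t k j < len j → s i = s k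

/-- (P5): if `a j ≤ m`, then `t i j = |I j|` for every job `i` alive in `j`. -/
def P5 {n L : ℕ} (m : ℕ) (len : Fin L → ℝ) (Alive : Fin n → Fin L → Bool)
    (t : Fin n → Fin L → ℝ) : Prop :=
  ∀ j, (univ.filter (fun i => Alive i j)).card ≤ m → ∀ i, Alive i j → t i j = len j

open Filter Topology Set

/-!
For fixed times `t`, the energy is strictly increasing in every speed and the smallest speeds
compatible with `t` are `w i / T i`, where `T i` is the total time job `i` receives; so an
optimal solution runs every job at exactly that speed. The energy of job `i` is then
`w i * (w i / T i) ^ (α - 1)`, whose derivative in `T i` is `-(α - 1) * s i ^ α`. Hence if in some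
interval a job `i` could receive more time while a job `k` could give some up and `s k < s i`,
moving a little time from `k` to `i` inside that interval keeps the schedule feasible and lowers
the energy: this exchange gives (P2)–(P4). If `a j ≤ m`, raising `t i j` to `|I j|` is feasible
and lowers the energy, which gives (P5).
-/

theorem Fintype.sum_lt_sum_of_pair {ι M : Type*} [Fintype ι] [AddCommGroup M] [PartialOrder M]
    [IsOrderedAddMonoid M] {f g : ι → M} {i k : ι} (hik : i ≠ k)
    (hoff : ∀ l, l ≠ i ∧ l ≠ k → f l = g l) (hpair : f i + f k < g i + g k) :
    ∑ l, f l < ∑ l, g l := by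
  have hdiff := Fintype.sum_eq_add (f := f - g) i k hik fun l hl => sub_eq_zero.mpr (hoff l hl)
  simp only [Pi.sub_apply, Finset.sum_sub_distrib] at hdiff
  rw [← sub_neg, hdiff, sub_add_sub_comm, sub_neg]
  exact hpair

theorem HasDerivAt.eventually_nhdsGT_lt {f : ℝ → ℝ} {f' x : ℝ} (hf : HasDerivAt f f' x)
    (hf' : f' < 0) : ∀ᶠ z in 𝓝[>] x, f z < f x := by
  filter_upwards [hf.hasDerivWithinAt.limsup_slope_le' (lt_irrefl x) hf',
    self_mem_nhdsWithin] with z hslope hz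
  rw [slope_def_field, div_neg_iff] at hslope
  rcases hslope with h | h <;> [linarith [h.2, mem_Ioi.mp hz]; linarith [h.1]]

theorem hasDerivAt_mul_div_rpow {c T : ℝ} (p : ℝ) (hc : 0 < c) (hT : 0 < T) :
    HasDerivAt (fun x => c * (c / x) ^ p) (-(p * (c / T) ^ (p + 1))) T := by
  have h : HasDerivAt (fun x => c * (c / x) ^ p)
      (c * ((0 * T - c * 1) / T ^ 2 * p * (c / T) ^ (p - 1))) T :=
    (((hasDerivAt_const T c).div (hasDerivAt_id T) hT.ne').rpow_const
      (Or.inl (div_pos hc hT).ne')).const_mul c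
  refine h.congr_deriv ?_
  have hk : (c / T) ^ (p - 1) * (c / T) ^ (2 : ℕ) = (c / T) ^ (p + 1) := by
    rw [← Real.rpow_natCast, ← Real.rpow_add (div_pos hc hT)]
    norm_num; ring_nf
  rw [div_pow] at hk
  rw [← hk]
  ring

/-- Moving a little processing time from a job running at speed `b / B` to a faster job running
at speed `a / A` (works `a`, `b`, processing times `A`, `B`) lowers the energy. -/
theorem eventually_transfer_energy_lt {a b A B p : ℝ} (ha : 0 < a) (hb : 0 < b) (hA : 0 < A)
    (hB : 0 < B) (hp : 0 < p) (hspeed : b / B < a / A) :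
    ∀ᶠ x in 𝓝[>] 0, a * (a / (A + x)) ^ p + b * (b / (B - x)) ^ p
      < a * (a / A) ^ p + b * (b / B) ^ p := by
  have hderiv :=
    ((hasDerivAt_mul_div_rpow p ha (by simpa using hA : 0 < A + 0)).comp_const_add A 0).add
      ((hasDerivAt_mul_div_rpow p hb (by simpa using hB : 0 < B - 0)).comp_const_sub B 0)
  have hneg : -(p * (a / (A + 0)) ^ (p + 1)) + -(-(p * (b / (B - 0)) ^ (p + 1))) < 0 := by
    have := Real.rpow_lt_rpow (div_pos hb hB).le hspeed (by linarith : 0 < p + 1)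
    rw [add_zero, sub_zero]
    nlinarith
  simpa using hderiv.eventually_nhdsGT_lt hneg

section Scheduling

variable {n L : ℕ} {m : ℕ} {α : ℝ} {w : Fin n → ℝ} {len : Fin L → ℝ}
  {Alive : Fin n → Fin L → Bool} {s : Fin n → ℝ} {t : Fin n → Fin L → ℝ}

def procTime (Alive : Fin n → Fin L → Bool) (t : Fin n → Fin L → ℝ) (i : Fin n) : ℝ :=
  ∑ j ∈ univ.filter (fun j => Alive i j), t i j

structure TimeFeasible (m : ℕ) (len : Fin L → ℝ) (Alive : Fin n → Fin L → Bool)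
    (t : Fin n → Fin L → ℝ) : Prop where
  nonneg : ∀ i j, 0 ≤ t i j
  eq_zero_of_not_alive : ∀ i j, ¬ Alive i j → t i j = 0
  sum_le : ∀ j, ∑ i ∈ univ.filter (fun i => Alive i j), t i j
      ≤ ((min m (univ.filter (fun i => Alive i j)).card : ℕ) : ℝ) * len j
  le_len : ∀ i j, t i j ≤ len j

theorem eFeasible_iff : EFeasible m w len Alive s t ↔
    (∀ i, 0 < s i) ∧ (∀ i, w i / s i ≤ procTime Alive t i) ∧ TimeFeasible m len Alive t :=
  ⟨fun ⟨hs, h0, hd, hw, hc, hl⟩ => ⟨hs, hw, h0, hd, hc, hl⟩,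
    fun ⟨hs, hw, h0, hd, hc, hl⟩ => ⟨hs, h0, hd, hw, hc, hl⟩⟩

theorem TimeFeasible.eFeasible_div (ht : TimeFeasible m len Alive t) (hw : ∀ i, 0 < w i)
    (hT : ∀ i, 0 < procTime Alive t i) : EFeasible m w len Alive (w / procTime Alive t) t :=
  eFeasible_iff.mpr ⟨fun i => div_pos (hw i) (hT i),
    fun i => (div_div_cancel₀ (hw i).ne').le, ht⟩

def shiftColumn (t : Fin n → Fin L → ℝ) (j : Fin L) (δ : Fin n → ℝ) : Fin n → Fin L → ℝ :=
  fun l => Function.update (t l) j (t l j + δ l)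

theorem procTime_shiftColumn {j : Fin L} {δ : Fin n → ℝ} (hδ : ∀ l, ¬ Alive l j → δ l = 0) :
    procTime Alive (shiftColumn t j δ) = procTime Alive t + δ := by
  funext l
  by_cases hl : Alive l j
  · have hj : j ∈ univ.filter (fun j => Alive l j) := mem_filter.mpr ⟨mem_univ j, hl⟩
    simp only [procTime, shiftColumn, Pi.add_apply, sum_update_of_mem hj,
      ← add_sum_erase _ _ hj, sdiff_singleton_eq_erase]
    ring
  · have hj : j ∉ univ.filter (fun j => Alive l j) := by simpa using hl
    simp only [procTime, shiftColumn, Pi.add_apply, hδ l hl, add_zero]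
    exact sum_congr rfl fun j' hj' => Function.update_of_ne (ne_of_mem_of_not_mem hj' hj) _ _

theorem TimeFeasible.shiftColumn (ht : TimeFeasible m len Alive t) {j : Fin L} {δ : Fin n → ℝ}
    (hδ : ∀ l, ¬ Alive l j → δ l = 0) (hbound : ∀ l, 0 ≤ t l j + δ l ∧ t l j + δ l ≤ len j)
    (hsum : ∑ l ∈ univ.filter (fun l => Alive l j), (t l j + δ l)
      ≤ ((min m (univ.filter (fun l => Alive l j)).card : ℕ) : ℝ) * len j) :
    TimeFeasible m len Alive (shiftColumn t j δ) where
  nonneg l j' := by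
    rcases eq_or_ne j' j with rfl | hj
    · simpa [_root_.shiftColumn] using (hbound l).1
    · simpa [_root_.shiftColumn, hj] using ht.nonneg l j'
  eq_zero_of_not_alive l j' hl := by
    rcases eq_or_ne j' j with rfl | hj
    · simp [_root_.shiftColumn, hδ l hl, ht.eq_zero_of_not_alive l j' hl]
    · simpa [_root_.shiftColumn, hj] using ht.eq_zero_of_not_alive l j' hl
  sum_le j' := by
    rcases eq_or_ne j' j with rfl | hj
    · simpa [_root_.shiftColumn] using hsum
    · simpa [_root_.shiftColumn, hj] using ht.sum_le j'
  le_len l j' := by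
    rcases eq_or_ne j' j with rfl | hj
    · simpa [_root_.shiftColumn] using (hbound l).2
    · simpa [_root_.shiftColumn, hj] using ht.le_len l j'

theorem transfer_eq_zero_of_not_alive {j : Fin L} {i k l : Fin n} {ε : ℝ} (hi : Alive i j)
    (hk : Alive k j) (hl : ¬ Alive l j) : (Pi.single i ε - Pi.single k ε : Fin n → ℝ) l = 0 := by
  have hli : l ≠ i := by rintro rfl; exact hl hi
  have hlk : l ≠ k := by rintro rfl; exact hl hk
  simp [hli, hlk]

theorem TimeFeasible.transfer (ht : TimeFeasible m len Alive t) {j : Fin L} {i k : Fin n}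
    {ε : ℝ} (hi : Alive i j) (hk : Alive k j) (hik : i ≠ k) (hε : 0 ≤ ε) (hεk : ε ≤ t k j)
    (hεi : t i j + ε ≤ len j) :
    TimeFeasible m len Alive (_root_.shiftColumn t j (Pi.single i ε - Pi.single k ε)) := by
  refine ht.shiftColumn (fun l => transfer_eq_zero_of_not_alive hi hk) (fun l => ?_) ?_
  · have := ht.nonneg l j
    have := ht.le_len l j
    rcases eq_or_ne l i with rfl | hli
    · simp only [Pi.sub_apply, Pi.single_eq_same, Pi.single_eq_of_ne hik]
      constructor <;> linarith
    rcases eq_or_ne l k with rfl | hlk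
    · simp only [Pi.sub_apply, Pi.single_eq_same, Pi.single_eq_of_ne hli]
      constructor <;> linarith
    · simpa [hli, hlk] using ⟨ht.nonneg l j, ht.le_len l j⟩
  · simpa [sum_add_distrib, sum_sub_distrib, hi, hk] using ht.sum_le j

theorem energy_strictMonoOn (hα : 1 < α) (hw : ∀ i, 0 < w i) :
    StrictMonoOn (Energy α w) {s | ∀ i, 0 < s i} := by
  intro s hs s' _ hss'
  obtain ⟨hle, i, hlt⟩ := Pi.lt_def.mp hss'
  refine sum_lt_sum (fun l _ => ?_) ⟨i, mem_univ i, ?_⟩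
  · exact mul_le_mul_of_nonneg_left (Real.rpow_le_rpow (hs l).le (hle l) (by linarith)) (hw l).le
  · exact mul_lt_mul_of_pos_left (Real.rpow_lt_rpow (hs i).le hlt (by linarith)) (hw i)

structure IsOptimal (m : ℕ) (α : ℝ) (w : Fin n → ℝ) (len : Fin L → ℝ)
    (Alive : Fin n → Fin L → Bool) (s : Fin n → ℝ) (t : Fin n → Fin L → ℝ) : Prop where
  feasible : EFeasible m w len Alive s t
  energy_le : ∀ s' t', EFeasible m w len Alive s' t' → Energy α w s ≤ Energy α w s'

namespace IsOptimal

theorem timeFeasible (h : IsOptimal m α w len Alive s t) : TimeFeasible m len Alive t :=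
  (eFeasible_iff.mp h.feasible).2.2

theorem procTime_pos (h : IsOptimal m α w len Alive s t) (hw : ∀ i, 0 < w i) (i : Fin n) :
    0 < procTime Alive t i := by
  obtain ⟨hs, hT, -⟩ := eFeasible_iff.mp h.feasible
  exact (div_pos (hw i) (hs i)).trans_le (hT i)

theorem eq_div_procTime (h : IsOptimal m α w len Alive s t) (hα : 1 < α) (hw : ∀ i, 0 < w i) :
    s = w / procTime Alive t := by
  obtain ⟨hs, hT, ht⟩ := eFeasible_iff.mp h.feasible
  have hle : w / procTime Alive t ≤ s := fun i =>
    (div_le_comm₀ (hs i) (h.procTime_pos hw i)).mp (hT i)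
  by_contra hne
  refine (h.energy_le _ _ (ht.eFeasible_div hw (h.procTime_pos hw))).not_gt ?_
  exact energy_strictMonoOn hα hw (fun i => div_pos (hw i) (h.procTime_pos hw i)) hs
    (lt_of_le_of_ne hle (Ne.symm hne))

theorem energy_le_of_timeFeasible (h : IsOptimal m α w len Alive s t) (hα : 1 < α)
    (hw : ∀ i, 0 < w i) {t' : Fin n → Fin L → ℝ} (ht' : TimeFeasible m len Alive t')
    (hT' : ∀ i, 0 < procTime Alive t' i) :
    Energy α w (w / procTime Alive t) ≤ Energy α w (w / procTime Alive t') := by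
  rw [← h.eq_div_procTime hα hw]
  exact h.energy_le _ _ (ht'.eFeasible_div hw hT')

theorem eq_len_of_card_le (h : IsOptimal m α w len Alive s t) (hα : 1 < α) (hw : ∀ i, 0 < w i)
    {j : Fin L} (hcard : (univ.filter (fun i => Alive i j)).card ≤ m) {i : Fin n}
    (hi : Alive i j) : t i j = len j := by
  have ht := h.timeFeasible
  by_contra hne
  have hgap : 0 < len j - t i j := sub_pos.mpr ((ht.le_len i j).lt_of_ne hne)
  set δ : Fin n → ℝ := Pi.single i (len j - t i j)
  have hδ_nonneg : 0 ≤ δ := Pi.single_nonneg.mpr hgap.le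
  have hδ_dead : ∀ l, ¬ Alive l j → δ l = 0 := fun l hl =>
    Pi.single_eq_of_ne (by rintro rfl; exact hl hi) _
  have hbound : ∀ l, 0 ≤ t l j + δ l ∧ t l j + δ l ≤ len j := by
    intro l
    refine ⟨add_nonneg (ht.nonneg l j) (hδ_nonneg l), ?_⟩
    rcases eq_or_ne l i with rfl | hl
    · simp [δ]
    · simpa [δ, hl] using ht.le_len l j
  have hfeas : TimeFeasible m len Alive (shiftColumn t j δ) := by
    refine ht.shiftColumn hδ_dead hbound ?_
    rw [min_eq_right hcard, ← nsmul_eq_mul]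
    exact sum_le_card_nsmul _ _ _ fun l _ => (hbound l).2
  have hT := h.procTime_pos hw
  have hT' : ∀ l, 0 < (procTime Alive t + δ) l := fun l =>
    add_pos_of_pos_of_nonneg (hT l) (hδ_nonneg l)
  have hle := h.energy_le_of_timeFeasible hα hw hfeas
  rw [procTime_shiftColumn hδ_dead] at hle
  refine (hle hT').not_gt (energy_strictMonoOn hα hw (fun l => div_pos (hw l) (hT' l))
    (fun l => div_pos (hw l) (hT l)) (Pi.lt_def.mpr ⟨fun l => ?_, i, ?_⟩))
  · exact div_le_div_of_nonneg_left (hw l).le (hT l) (le_add_of_nonneg_right (hδ_nonneg l))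
  · exact div_lt_div_of_pos_left (hw i) (hT i) (by simp [δ, hgap])

theorem speed_le_of_lt_len_of_pos (h : IsOptimal m α w len Alive s t) (hα : 1 < α)
    (hw : ∀ i, 0 < w i) {j : Fin L} {i k : Fin n} (hi : Alive i j) (hk : Alive k j)
    (hti : t i j < len j) (htk : 0 < t k j) : s i ≤ s k := by
  have ht := h.timeFeasible
  have hT := h.procTime_pos hw
  by_contra! hlt
  rw [h.eq_div_procTime hα hw] at hlt
  have hik : i ≠ k := by rintro rfl; exact lt_irrefl _ hlt
  obtain ⟨ε, hE, hε_pos, hε_lt⟩ := ((eventually_transfer_energy_lt (hw i) (hw k) (hT i) (hT k)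
    (sub_pos.mpr hα) hlt).and (Ioo_mem_nhdsGT (lt_min htk (sub_pos.mpr hti)))).exists
  obtain ⟨hεk, hεi⟩ := lt_min_iff.mp hε_lt
  set δ : Fin n → ℝ := Pi.single i ε - Pi.single k ε
  have hT' : ∀ l, 0 < (procTime Alive t + δ) l := by
    intro l
    rcases eq_or_ne l i with rfl | hli
    · simpa [δ, hik] using add_pos (hT l) hε_pos
    rcases eq_or_ne l k with rfl | hlk
    · have : t l j ≤ procTime Alive t l :=
        single_le_sum (fun j' _ => ht.nonneg l j') (mem_filter.mpr ⟨mem_univ j, hk⟩)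
      simp only [δ, Pi.add_apply, Pi.sub_apply, Pi.single_eq_of_ne hli, Pi.single_eq_same]
      linarith
    · simpa [δ, hli, hlk] using hT l
  have hle := h.energy_le_of_timeFeasible hα hw
    (ht.transfer hi hk hik hε_pos.le hεk.le (by linarith))
  rw [procTime_shiftColumn fun l => transfer_eq_zero_of_not_alive hi hk] at hle
  refine (hle hT').not_gt (Fintype.sum_lt_sum_of_pair hik (fun l hl => ?_) ?_)
  · simp [hl.1, hl.2]
  · simpa [δ, hik, hik.symm, sub_eq_add_neg] using hE

end IsOptimal

end Scheduling

theorem necessity_of_KKT_properties_general {n L : ℕ} (m : ℕ) (α : ℝ)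
    (w : Fin n → ℝ) (len : Fin L → ℝ) (Alive : Fin n → Fin L → Bool)
    (hα : 1 < α) (hw : ∀ i, 0 < w i)
    (s : Fin n → ℝ) (t : Fin n → Fin L → ℝ)
    (hfeas : EFeasible m w len Alive s t)
    (hopt : ∀ s' t', EFeasible m w len Alive s' t' → Energy α w s ≤ Energy α w s') :
    P2 Alive s t ∧ P3 len Alive s t ∧ P4 len Alive s t ∧ P5 m len Alive t := by
  have h : IsOptimal m α w len Alive s t := ⟨hfeas, hopt⟩
  have ht := h.timeFeasible
  have exchange : ∀ {j i k}, Alive i j → Alive k j → t i j < len j → 0 < t k j → s i ≤ s k :=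
    fun hi hk => h.speed_le_of_lt_len_of_pos hα hw hi hk
  refine ⟨?_, ?_, ?_, fun j hcard i hi => h.eq_len_of_card_le hα hw hcard hi⟩
  · intro i j hi hti k hk htk
    exact exchange hi hk (hti ▸ htk.trans_le (ht.le_len k j)) htk
  · intro i j hi hti k hk htk
    exact exchange hk hi htk (hti ▸ (ht.nonneg k j).trans_lt htk)
  · intro i k j hi hk hti_pos hti_lt htk_pos htk_lt
    exact (exchange hi hk hti_lt htk_pos).antisymm (exchange hk hi htk_lt hti_pos)

/-- (Necessity direction of Lemma 1.) Every optimal feasible solution of the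
energy-minimization convex program satisfies properties (P2)–(P5). -/
theorem necessity_of_KKT_properties {n L : ℕ} (m : ℕ) (α : ℝ)
    (w : Fin n → ℝ) (len : Fin L → ℝ) (Alive : Fin n → Fin L → Bool)
    (hm : 1 ≤ m) (hα : 1 < α) (hw : ∀ i, 0 < w i) (hlen : ∀ j, 0 < len j)
    (s : Fin n → ℝ) (t : Fin n → Fin L → ℝ)
    (hfeas : EFeasible m w len Alive s t)
    (hopt : ∀ s' t', EFeasible m w len Alive s' t' → Energy α w s ≤ Energy α w s') :
    P2 Alive s t ∧ P3 len Alive s t ∧ P4 len Alive s t ∧ P5 m len Alive t :=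
  necessity_of_KKT_properties_general m α w len Alive hα hw s t hfeas hopt
end

section
/- (Claim 1.) Let N be a finite directed network with nonnegative edge capacities, source s and sink t, let f be any maximum (s,t)-flow of N, and let N_f be the residual graph of f. Then a node v is an upstream node (i.e., v lies on the source side of every minimum (s,t)-cut of N) if and only if v is reachable from s by a directed path in N_f. In particular, the set of upstream nodes can be found by a breadth-first search from s in the residual graph of any maximum flow. -/
/-- `f` is a flow for capacities `c` with source `s` and sink `t`:
`0 ≤ f ≤ c` on every (ordered) pair of nodes, and flow is conserved at every
node other than `s` and `t`. -/
def IsFlow {V : Type*} [Fintype V] (c f : V → V → ℝ) (s t : V) : Prop :=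
  (∀ u v, 0 ≤ f u v) ∧ (∀ u v, f u v ≤ c u v) ∧
  (∀ v, v ≠ s → v ≠ t → ∑ u, f u v = ∑ u, f v u)

/-- The value of a flow: the net flow leaving the source `s`. -/
def flowValue {V : Type*} [Fintype V] (f : V → V → ℝ) (s : V) : ℝ :=
  (∑ u, f s u) - (∑ u, f u s)

/-- `f` is a maximum flow. -/
def IsMaxFlow {V : Type*} [Fintype V] (c f : V → V → ℝ) (s t : V) : Prop :=
  IsFlow c f s t ∧ ∀ g, IsFlow c g s t → flowValue g s ≤ flowValue f s

/-- An `(s,t)`-cut, identified with its source side `X`: `s ∈ X` and `t ∉ X`.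
The edges of the cut are the pairs `(u, v)` with `u ∈ X` and `v ∉ X`. -/
def IsCut {V : Type*} (X : Finset V) (s t : V) : Prop := s ∈ X ∧ t ∉ X

/-- The capacity of the cut with source side `X`. -/
def cutCap {V : Type*} [Fintype V] [DecidableEq V] (c : V → V → ℝ) (X : Finset V) : ℝ :=
  ∑ u ∈ X, ∑ v ∈ Xᶜ, c u v

/-- `X` is (the source side of) a minimum `(s,t)`-cut. -/
def IsMinCut {V : Type*} [Fintype V] [DecidableEq V] (c : V → V → ℝ) (X : Finset V)
    (s t : V) : Prop :=
  IsCut X s t ∧ ∀ Y : Finset V, IsCut Y s t → cutCap c X ≤ cutCap c Y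

/-!
If the sink were reachable from `s` in the residual graph, pushing a small `ε` along a residual
walk (forward on unsaturated edges, backward on edges carrying flow) would increase the flow value;
so for a maximum flow the set `R` of residually reachable nodes is an `(s,t)`-cut. For any flow `f`
and cut `X`, `cutCap c X - flowValue f s = ∑ u ∈ X, ∑ v ∉ X, (c u v - f u v + f v u)` is a sum of
residual capacities, so the value equals the capacity exactly when no residual edge leaves `X`.
Hence `R` is a minimum cut, and every minimum cut is tight for `f`, so it is closed under residual
edges and contains `R`.
-/

open Finset Filter Topology Relation

def ResidualAdj {V : Type*} (c f : V → V → ℝ) (a b : V) : Prop := f a b < c a b ∨ 0 < f b a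

section NetOutflow

variable {V : Type*} [Fintype V]

def netOutflow (g : V → V → ℝ) (w : V) : ℝ := ∑ u, g w u - ∑ u, g u w

lemma netOutflow_eq_zero_iff (g : V → V → ℝ) (w : V) :
    netOutflow g w = 0 ↔ ∑ u, g u w = ∑ u, g w u := by
  rw [netOutflow, sub_eq_zero, eq_comm]

lemma netOutflow_add_smul (g h : V → V → ℝ) (ε : ℝ) (w : V) :
    netOutflow (g + ε • h) w = netOutflow g w + ε * netOutflow h w := by
  simp only [netOutflow, Pi.add_apply, Pi.smul_apply, smul_eq_mul, sum_add_distrib, ← mul_sum]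
  ring

lemma sum_netOutflow [DecidableEq V] (g : V → V → ℝ) (X : Finset V) :
    ∑ u ∈ X, netOutflow g u = ∑ u ∈ X, ∑ v ∈ Xᶜ, (g u v - g v u) := by
  have hsplit : ∀ u, netOutflow g u = ∑ v ∈ X, (g u v - g v u) + ∑ v ∈ Xᶜ, (g u v - g v u) := by
    intro u
    rw [sum_add_sum_compl, netOutflow, sum_sub_distrib]
  have hinner : ∑ u ∈ X, ∑ v ∈ X, (g u v - g v u) = 0 := by
    simp only [sum_sub_distrib]
    exact sub_eq_zero.2 sum_comm
  rw [sum_congr rfl fun u _ => hsplit u, sum_add_distrib, hinner, zero_add]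

end NetOutflow

section Cuts

variable {V : Type*} [Fintype V] {c f : V → V → ℝ} {s t : V} {X : Finset V}

lemma IsFlow.sum_netOutflow_eq_flowValue (hf : IsFlow c f s t) (hX : IsCut X s t) :
    ∑ u ∈ X, netOutflow f u = flowValue f s := by
  refine sum_eq_single_of_mem s hX.1 fun u hu hus => ?_
  exact (netOutflow_eq_zero_iff f u).2 (hf.2.2 u hus fun h => hX.2 (h ▸ hu))

lemma IsFlow.residualCap_nonneg (hf : IsFlow c f s t) (u v : V) : 0 ≤ c u v - f u v + f v u := by
  linarith [hf.1 v u, hf.2.1 u v]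

variable [DecidableEq V]

lemma IsFlow.cutCap_sub_flowValue (hf : IsFlow c f s t) (hX : IsCut X s t) :
    cutCap c X - flowValue f s = ∑ u ∈ X, ∑ v ∈ Xᶜ, (c u v - f u v + f v u) := by
  rw [← hf.sum_netOutflow_eq_flowValue hX, sum_netOutflow, cutCap, ← sum_sub_distrib]
  refine sum_congr rfl fun u _ => ?_
  rw [← sum_sub_distrib]
  exact sum_congr rfl fun v _ => by ring

lemma IsFlow.flowValue_le_cutCap (hf : IsFlow c f s t) (hX : IsCut X s t) :
    flowValue f s ≤ cutCap c X := by
  have hgap := hf.cutCap_sub_flowValue hX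
  have : 0 ≤ ∑ u ∈ X, ∑ v ∈ Xᶜ, (c u v - f u v + f v u) :=
    sum_nonneg fun u _ => sum_nonneg fun v _ => hf.residualCap_nonneg u v
  linarith

lemma IsFlow.flowValue_eq_cutCap_iff (hf : IsFlow c f s t) (hX : IsCut X s t) :
    flowValue f s = cutCap c X ↔ ∀ u ∈ X, ∀ v, ResidualAdj c f u v → v ∈ X := by
  rw [eq_comm, ← sub_eq_zero, hf.cutCap_sub_flowValue hX,
    sum_eq_zero_iff_of_nonneg fun u _ => sum_nonneg fun v _ => hf.residualCap_nonneg u v]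
  refine forall₂_congr fun u _ => ?_
  rw [sum_eq_zero_iff_of_nonneg fun v _ => hf.residualCap_nonneg u v]
  refine forall_congr' fun v => ?_
  have hvu := hf.1 v u
  have huv := hf.2.1 u v
  rw [mem_compl, ResidualAdj]
  constructor
  · intro h hr
    by_contra hv
    have hzero := h hv
    rcases hr with hr | hr <;> linarith
  · intro h hv
    obtain ⟨hsat, hempty⟩ := not_or.1 (mt h hv)
    linarith [not_lt.1 hsat, not_lt.1 hempty]

lemma IsFlow.mem_of_reflTransGen (hf : IsFlow c f s t) (hX : IsCut X s t)
    (hval : flowValue f s = cutCap c X) {v : V} (hv : ReflTransGen (ResidualAdj c f) s v) :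
    v ∈ X := by
  induction hv with
  | refl => exact hX.1
  | tail _ hbw hb => exact (hf.flowValue_eq_cutCap_iff hX).1 hval _ hb _ hbw

end Cuts

section Augmentation

variable {V : Type*} {c f : V → V → ℝ}

def IsFeasibleDirection (c f h : V → V → ℝ) : Prop :=
  ∀ x y, (0 < h x y → f x y < c x y) ∧ (h x y < 0 → 0 < f x y)

lemma IsFeasibleDirection.exists_pos_smul_mem_Icc [Finite V] (hf0 : ∀ x y, 0 ≤ f x y)
    (hfc : ∀ x y, f x y ≤ c x y) {h : V → V → ℝ} (hh : IsFeasibleDirection c f h) :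
    ∃ ε : ℝ, 0 < ε ∧ ∀ x y, (f + ε • h) x y ∈ Set.Icc 0 (c x y) := by
  have hev : ∀ x y, ∀ᶠ ε in 𝓝[>] (0 : ℝ), 0 ≤ f x y + ε * h x y ∧ f x y + ε * h x y ≤ c x y := by
    intro x y
    have hcont : Tendsto (fun ε : ℝ => f x y + ε * h x y) (𝓝[>] 0) (𝓝 (f x y)) := by
      have : Continuous fun ε : ℝ => f x y + ε * h x y := by fun_prop
      simpa using (this.tendsto 0).mono_left nhdsWithin_le_nhds
    rcases lt_trichotomy (h x y) 0 with hneg | hzero | hpos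
    · filter_upwards [hcont.eventually (lt_mem_nhds ((hh x y).2 hneg)), self_mem_nhdsWithin]
        with ε hε hεpos
      exact ⟨hε.le, by nlinarith [hfc x y, hεpos.out]⟩
    · exact Eventually.of_forall fun ε => by simp [hzero, hf0 x y, hfc x y]
    · filter_upwards [hcont.eventually (gt_mem_nhds ((hh x y).1 hpos)), self_mem_nhdsWithin]
        with ε hε hεpos
      exact ⟨by nlinarith [hf0 x y, hεpos.out], hε.le⟩
  obtain ⟨ε, hε, hεpos⟩ :=
    ((eventually_all.2 fun x => eventually_all.2 (hev x)).and self_mem_nhdsWithin).exists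
  exact ⟨ε, hεpos, hε⟩

variable [DecidableEq V]

def unitEdge (a b : V) : V → V → ℝ := fun x y => if x = a ∧ y = b then 1 else 0

lemma IsFeasibleDirection.add_unitEdge {h : V → V → ℝ} (hh : IsFeasibleDirection c f h)
    {a b : V} (hab : f a b < c a b) : IsFeasibleDirection c f (h + unitEdge a b) := by
  intro x y
  by_cases hxy : x = a ∧ y = b
  · obtain ⟨rfl, rfl⟩ := hxy
    simp only [Pi.add_apply, unitEdge, and_self, if_true]
    exact ⟨fun _ => hab, fun hneg => (hh x y).2 (by linarith)⟩
  · simpa [unitEdge, hxy] using hh x y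

lemma IsFeasibleDirection.sub_unitEdge {h : V → V → ℝ} (hh : IsFeasibleDirection c f h)
    {a b : V} (hab : 0 < f a b) : IsFeasibleDirection c f (h - unitEdge a b) := by
  intro x y
  by_cases hxy : x = a ∧ y = b
  · obtain ⟨rfl, rfl⟩ := hxy
    simp only [Pi.sub_apply, unitEdge, and_self, if_true]
    exact ⟨fun hpos => (hh x y).1 (by linarith), fun _ => hab⟩
  · simpa [unitEdge, hxy] using hh x y

variable [Fintype V]

lemma netOutflow_unitEdge (a b w : V) :
    netOutflow (unitEdge a b) w = (if w = a then 1 else 0) - (if w = b then 1 else 0) := by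
  simp [netOutflow, unitEdge, ite_and]

/-- The walk may repeat edges: `h` counts their signed uses, and feasibility only looks at signs. -/
lemma exists_feasibleDirection_of_reflTransGen {s w : V} (hw : ReflTransGen (ResidualAdj c f) s w) :
    ∃ h, IsFeasibleDirection c f h ∧
      ∀ x, netOutflow h x = (if x = s then 1 else 0) - (if x = w then 1 else 0) := by
  induction hw with
  | refl => exact ⟨0, fun x y => by simp, fun x => by simp [netOutflow]⟩
  | @tail b w _ hbw ih =>
    obtain ⟨h, hh, hnet⟩ := ih
    rcases hbw with hfwd | hbwd
    · refine ⟨h + unitEdge b w, hh.add_unitEdge hfwd, fun x => ?_⟩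
      have hstep := netOutflow_add_smul h (unitEdge b w) 1 x
      rw [one_smul, one_mul, netOutflow_unitEdge, hnet] at hstep
      rw [hstep]; ring
    · refine ⟨h - unitEdge w b, hh.sub_unitEdge hbwd, fun x => ?_⟩
      have hstep := netOutflow_add_smul h (unitEdge w b) (-1) x
      rw [neg_one_smul, ← sub_eq_add_neg, netOutflow_unitEdge, hnet] at hstep
      rw [hstep]; ring

end Augmentation

section MaxFlow

variable {V : Type*} [Fintype V] [DecidableEq V] {c f : V → V → ℝ} {s t : V}

lemma IsFlow.exists_flowValue_gt (hst : s ≠ t) (hf : IsFlow c f s t)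
    (ht : ReflTransGen (ResidualAdj c f) s t) :
    ∃ g, IsFlow c g s t ∧ flowValue f s < flowValue g s := by
  obtain ⟨h, hh, hnet⟩ := exists_feasibleDirection_of_reflTransGen ht
  obtain ⟨ε, hε, hbounds⟩ := hh.exists_pos_smul_mem_Icc hf.1 hf.2.1
  have hgnet : ∀ x, netOutflow (f + ε • h) x =
      netOutflow f x + ε * ((if x = s then 1 else 0) - (if x = t then 1 else 0)) := fun x => by
    rw [netOutflow_add_smul, hnet]
  refine ⟨f + ε • h, ⟨fun x y => (hbounds x y).1, fun x y => (hbounds x y).2, fun x hxs hxt => ?_⟩, ?_⟩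
  · rw [← netOutflow_eq_zero_iff, hgnet, if_neg hxs, if_neg hxt,
      (netOutflow_eq_zero_iff f x).2 (hf.2.2 x hxs hxt)]
    ring
  · have hs := hgnet s
    rw [if_pos rfl, if_neg hst] at hs
    show netOutflow f s < netOutflow (f + ε • h) s
    linarith

lemma IsMaxFlow.not_reflTransGen_sink (hst : s ≠ t) (hf : IsMaxFlow c f s t) :
    ¬ ReflTransGen (ResidualAdj c f) s t := fun ht =>
  let ⟨g, hg, hlt⟩ := hf.1.exists_flowValue_gt hst ht
  not_le.2 hlt (hf.2 g hg)

lemma IsMaxFlow.exists_tight_cut_eq_reflTransGen (hst : s ≠ t) (hf : IsMaxFlow c f s t) :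
    ∃ R : Finset V, IsCut R s t ∧ flowValue f s = cutCap c R ∧
      ∀ v, v ∈ R ↔ ReflTransGen (ResidualAdj c f) s v := by
  classical
  set R := univ.filter (ReflTransGen (ResidualAdj c f) s)
  have hR : ∀ v, v ∈ R ↔ ReflTransGen (ResidualAdj c f) s v := by simp [R]
  have hcut : IsCut R s t := ⟨(hR s).2 .refl, fun ht => hf.not_reflTransGen_sink hst ((hR t).1 ht)⟩
  refine ⟨R, hcut, (hf.1.flowValue_eq_cutCap_iff hcut).2 fun u hu v huv => ?_, hR⟩
  exact (hR v).2 (((hR u).1 hu).tail huv)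

end MaxFlow

theorem upstream_iff_residual_reachable_general {V : Type*} [Fintype V] [DecidableEq V]
    (c f : V → V → ℝ) (s t : V) (hst : s ≠ t)
    (hf : IsMaxFlow c f s t) (v : V) :
    (∀ X : Finset V, IsMinCut c X s t → v ∈ X) ↔
      Relation.ReflTransGen (fun a b => f a b < c a b ∨ 0 < f b a) s v := by
  obtain ⟨R, hRcut, hRval, hR⟩ := hf.exists_tight_cut_eq_reflTransGen hst
  have hRmin : IsMinCut c R s t :=
    ⟨hRcut, fun Y hY => hRval ▸ hf.1.flowValue_le_cutCap hY⟩
  refine ⟨fun hv => (hR v).1 (hv R hRmin), fun hv X hX => ?_⟩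
  have hXval : flowValue f s = cutCap c X :=
    le_antisymm (hf.1.flowValue_le_cutCap hX.1) (hRval ▸ hX.2 R hRcut)
  exact hf.1.mem_of_reflTransGen hX.1 hXval hv

/-- (Claim 1.) In a finite directed network with nonnegative capacities `c`,
source `s` and sink `t`, given any maximum flow `f`, a node `v` is an upstream
node (it lies on the source side of every minimum `(s,t)`-cut) if and only if
`v` is reachable from `s` by a directed path in the residual graph of `f`
(whose edges are the pairs `(a, b)` with `f a b < c a b`, or `0 < f b a`). -/
theorem upstream_iff_residual_reachable {V : Type*} [Fintype V] [DecidableEq V]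
    (c f : V → V → ℝ) (s t : V) (hst : s ≠ t) (hc : ∀ u v, 0 ≤ c u v)
    (hf : IsMaxFlow c f s t) (v : V) :
    (∀ X : Finset V, IsMinCut c X s t → v ∈ X) ↔
      Relation.ReflTransGen (fun a b => f a b < c a b ∨ 0 < f b a) s v :=
  upstream_iff_residual_reachable_general c f s t hst hf v
end

section
/- (Lemma 3.) If <J,I,v> is a critical instance of the Work Assignment Problem, then there exists at least one critical job j_i ∈ J. -/
open Finset

/-- A feasible assignment for the WAP instance `⟨J, I, v⟩`: times `t i j ≥ 0`,
`t i j = 0` if job `i` is not alive in interval `j`, `t i j ≤ |I j|`,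
the capacity `m j * |I j|` of each interval is respected, and each job `i`
receives exactly `w i / v` units of processing time. -/
def WFeasAssign {n L : ℕ} (w : Fin n → ℝ) (len : Fin L → ℝ) (mj : Fin L → ℕ)
    (Alive : Fin n → Fin L → Bool) (v : ℝ) (t : Fin n → Fin L → ℝ) : Prop :=
  (∀ i j, 0 ≤ t i j) ∧
  (∀ i j, ¬ Alive i j → t i j = 0) ∧
  (∀ i j, t i j ≤ len j) ∧
  (∀ j, ∑ i ∈ univ.filter (fun i => Alive i j), t i j ≤ (mj j : ℝ) * len j) ∧
  (∀ i, ∑ j ∈ univ.filter (fun j => Alive i j), t i j = w i / v)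

/-- The WAP instance `⟨J, I, v⟩` is feasible if a feasible assignment exists. -/
def WFeasible {n L : ℕ} (w : Fin n → ℝ) (len : Fin L → ℝ) (mj : Fin L → ℕ)
    (Alive : Fin n → Fin L → Bool) (v : ℝ) : Prop :=
  ∃ t, WFeasAssign w len mj Alive v t

/-- Job `i` is critical for `⟨J, I, v⟩`: in every feasible assignment and every
interval `j` in which `i` is alive, either `t i j = |I j|` or the whole capacity
`m j * |I j|` of the interval is used. -/
def CriticalJob {n L : ℕ} (w : Fin n → ℝ) (len : Fin L → ℝ) (mj : Fin L → ℕ)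
    (Alive : Fin n → Fin L → Bool) (v : ℝ) (i : Fin n) : Prop :=
  ∀ t, WFeasAssign w len mj Alive v t → ∀ j, Alive i j →
    t i j = len j ∨ ∑ k ∈ univ.filter (fun k => Alive k j), t k j = (mj j : ℝ) * len j

/-- The instance `⟨J, I, v⟩` is critical: it is feasible, but `⟨J, I, v'⟩` is
infeasible for every speed `0 < v' < v`. -/
def CriticalInstance {n L : ℕ} (w : Fin n → ℝ) (len : Fin L → ℝ) (mj : Fin L → ℕ)
    (Alive : Fin n → Fin L → Bool) (v : ℝ) : Prop :=
  WFeasible w len mj Alive v ∧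
    ∀ v', 0 < v' → v' < v → ¬ WFeasible w len mj Alive v'

/-!
If no job were critical, every job `i` would have a feasible assignment leaving slack at some
interval `J i` in which it is alive: `i` does not run for all of `I (J i)` and `I (J i)` has spare
capacity. Averaging these assignments keeps feasibility and leaves slack at every `(i, J i)` at
once. For small `c > 0` every job can then be given the extra time `c * w i` in `J i`, which is
exactly what running at the lower speed `(v⁻¹ + c)⁻¹` requires, so the instance is not critical.
-/

open Filter Topology
open scoped BigOperators

variable {n L : ℕ} {w : Fin n → ℝ} {len : Fin L → ℝ} {mj : Fin L → ℕ}
  {Alive : Fin n → Fin L → Bool} {v : ℝ}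

theorem exists_pos_mul_le {ι : Type*} [Finite ι] (a : ℝ) {s : ι → ℝ} (hs : ∀ i, 0 < s i) :
    ∃ c > 0, ∀ i, c * a ≤ s i := by
  have hsmall : ∀ i, ∀ᶠ c in 𝓝[>] (0 : ℝ), c * a ≤ s i := fun i =>
    (((continuous_mul_const a).tendsto' 0 0 (zero_mul a)).mono_left
      nhdsWithin_le_nhds).eventually (eventually_le_nhds (hs i))
  exact ((eventually_all.2 hsmall).and self_mem_nhdsWithin).exists.imp fun c h => ⟨h.2, h.1⟩

def HasSlack (len : Fin L → ℝ) (mj : Fin L → ℕ) (Alive : Fin n → Fin L → Bool)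
    (t : Fin n → Fin L → ℝ) (i : Fin n) (j : Fin L) : Prop :=
  Alive i j ∧ t i j < len j ∧ ∑ k ∈ univ.filter (fun k => Alive k j), t k j < (mj j : ℝ) * len j

theorem exists_hasSlack_of_not_criticalJob {i : Fin n}
    (h : ¬ CriticalJob w len mj Alive v i) :
    ∃ t, WFeasAssign w len mj Alive v t ∧ ∃ j, HasSlack len mj Alive t i j := by
  simp only [CriticalJob, not_forall, not_or] at h
  obtain ⟨t, ht, j, hj, hrow, hcol⟩ := h
  exact ⟨t, ht, j, hj, (ht.2.2.1 i j).lt_of_ne hrow, (ht.2.2.2.1 j).lt_of_ne hcol⟩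

section Average

variable {ι : Type*} [Fintype ι] {τ : ι → Fin n → Fin L → ℝ}

theorem WFeasAssign.expect [Nonempty ι] (hτ : ∀ k, WFeasAssign w len mj Alive v (τ k)) :
    WFeasAssign w len mj Alive v (fun i j => 𝔼 k, τ k i j) := by
  refine ⟨fun i j => expect_nonneg fun k _ => (hτ k).1 i j,
    fun i j hij => expect_eq_zero fun k _ => (hτ k).2.1 i j hij,
    fun i j => expect_le univ_nonempty fun k _ => (hτ k).2.2.1 i j, fun j => ?_, fun i => ?_⟩
  · rw [← expect_sum_comm]
    exact expect_le univ_nonempty fun k _ => (hτ k).2.2.2.1 j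
  · rw [← expect_sum_comm, expect_congr rfl fun k _ => (hτ k).2.2.2.2 i, expect_const univ_nonempty]

theorem HasSlack.expect (hτ : ∀ k, WFeasAssign w len mj Alive v (τ k)) {k₀ : ι} {i : Fin n}
    {j : Fin L} (h : HasSlack len mj Alive (τ k₀) i j) :
    HasSlack len mj Alive (fun i j => 𝔼 k, τ k i j) i j := by
  refine ⟨h.1, expect_lt (fun k _ => (hτ k).2.2.1 i j) ⟨k₀, mem_univ _, h.2.1⟩, ?_⟩
  rw [← expect_sum_comm]
  exact expect_lt (fun k _ => (hτ k).2.2.2.1 j) ⟨k₀, mem_univ _, h.2.2⟩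

end Average

theorem exists_feasAssign_forall_hasSlack (h₀ : WFeasible w len mj Alive v)
    (h : ∀ i, ∃ t, WFeasAssign w len mj Alive v t ∧ ∃ j, HasSlack len mj Alive t i j) :
    ∃ t, WFeasAssign w len mj Alive v t ∧
      ∃ J : Fin n → Fin L, ∀ i, HasSlack len mj Alive t i (J i) := by
  choose τ hτ J hJ using h
  rcases isEmpty_or_nonempty (Fin n) with hn | hn
  · obtain ⟨t, ht⟩ := h₀
    exact ⟨t, ht, isEmptyElim, isEmptyElim⟩
  · exact ⟨_, .expect hτ, J, fun i => (hJ i).expect hτ⟩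

theorem WFeasAssign.add_bump {t : Fin n → Fin L → ℝ} (ht : WFeasAssign w len mj Alive v t)
    {J : Fin n → Fin L} (hJ : ∀ i, Alive i (J i)) (hw : ∀ i, 0 ≤ w i) {c : ℝ} (hc : 0 ≤ c)
    (hrow : ∀ i, t i (J i) + c * w i ≤ len (J i))
    (hcol : ∀ i, ∑ k ∈ univ.filter (fun k => Alive k (J i)), t k (J i) + c * ∑ k, w k ≤
      (mj (J i) : ℝ) * len (J i)) :
    WFeasAssign w len mj Alive (v⁻¹ + c)⁻¹
      (fun i j => t i j + if j = J i then c * w i else 0) := by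
  have hbump : ∀ i, 0 ≤ c * w i := fun i => mul_nonneg hc (hw i)
  refine ⟨fun i j => ?_, fun i j hij => ?_, fun i j => ?_, fun j => ?_, fun i => ?_⟩ <;>
    dsimp only
  · have := ht.1 i j
    split_ifs <;> linarith [hbump i]
  · rw [if_neg (by rintro rfl; exact hij (hJ i)), ht.2.1 i j hij, add_zero]
  · split_ifs with hj
    · exact hj ▸ hrow i
    · simpa using ht.2.2.1 i j
  · rw [sum_add_distrib]
    by_cases hj : ∃ i, J i = j
    · obtain ⟨i, rfl⟩ := hj
      refine le_trans (add_le_add_right ?_ _) (hcol i)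
      calc ∑ k ∈ univ.filter (fun k => Alive k (J i)), (if J i = J k then c * w k else 0)
          ≤ ∑ k ∈ univ.filter (fun k => Alive k (J i)), c * w k :=
            sum_le_sum fun k _ => by split_ifs <;> linarith [hbump k]
        _ ≤ ∑ k, c * w k :=
            sum_le_sum_of_subset_of_nonneg (filter_subset _ _) fun k _ _ => hbump k
        _ = c * ∑ k, w k := (mul_sum _ _ _).symm
    · push Not at hj
      rw [sum_eq_zero fun k _ => if_neg (hj k).symm, add_zero]
      exact ht.2.2.2.1 j
  · rw [sum_add_distrib, ht.2.2.2.2 i, sum_ite_eq' _ (J i),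
      if_pos (by simpa using hJ i), div_inv_eq_mul, div_eq_mul_inv]
    ring

theorem WFeasAssign.exists_feasible_lt_speed {t : Fin n → Fin L → ℝ}
    (ht : WFeasAssign w len mj Alive v t) {J : Fin n → Fin L}
    (hJ : ∀ i, HasSlack len mj Alive t i (J i)) (hw : ∀ i, 0 ≤ w i) (hv : 0 < v) :
    ∃ v', 0 < v' ∧ v' < v ∧ WFeasible w len mj Alive v' := by
  obtain ⟨c, hc, hcs⟩ := exists_pos_mul_le (∑ k, w k) (s := fun i => min
      (len (J i) - t i (J i))
      ((mj (J i) : ℝ) * len (J i) - ∑ k ∈ univ.filter (fun k => Alive k (J i)), t k (J i)))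
    fun i => lt_min (sub_pos.2 (hJ i).2.1) (sub_pos.2 (hJ i).2.2)
  have hle_total : ∀ i, c * w i ≤ c * ∑ k, w k := fun i =>
    mul_le_mul_of_nonneg_left (single_le_sum (fun k _ => hw k) (mem_univ i)) hc.le
  refine ⟨(v⁻¹ + c)⁻¹, by positivity, inv_lt_of_inv_lt₀ hv (lt_add_of_pos_right _ hc), _,
    ht.add_bump (fun i => (hJ i).1) hw hc.le (fun i => ?_) (fun i => ?_)⟩
  · linarith [hle_total i, (hcs i).trans (min_le_left _ _)]
  · linarith [(hcs i).trans (min_le_right _ _)]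

theorem critical_instance_has_critical_job_general {n L : ℕ} (w : Fin n → ℝ)
    (len : Fin L → ℝ) (mj : Fin L → ℕ) (Alive : Fin n → Fin L → Bool) (v : ℝ)
    (hw : ∀ i, 0 < w i) (hv : 0 < v)
    (hcrit : CriticalInstance w len mj Alive v) :
    ∃ i : Fin n, CriticalJob w len mj Alive v i := by
  by_contra! hno
  obtain ⟨t, ht, J, hJ⟩ := exists_feasAssign_forall_hasSlack hcrit.1
    fun i => exists_hasSlack_of_not_criticalJob (hno i)
  obtain ⟨v', hv'_pos, hv'_lt, hv'⟩ := ht.exists_feasible_lt_speed hJ (fun i => (hw i).le) hv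
  exact hcrit.2 v' hv'_pos hv'_lt hv'

/-- (Lemma 3.) If `⟨J, I, v⟩` is a critical instance of the Work Assignment
Problem, then there is at least one critical job. -/
theorem critical_instance_has_critical_job {n L : ℕ} (w : Fin n → ℝ)
    (len : Fin L → ℝ) (mj : Fin L → ℕ) (Alive : Fin n → Fin L → Bool) (v : ℝ)
    (hw : ∀ i, 0 < w i) (hlen : ∀ j, 0 < len j) (hmj : ∀ j, 1 ≤ mj j) (hv : 0 < v)
    (hcrit : CriticalInstance w len mj Alive v) :
    ∃ i : Fin n, CriticalJob w len mj Alive v i :=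
  critical_instance_has_critical_job_general w len mj Alive v hw hv hcrit
end

section
/- (Lemma 5, part (i).) Let <J,I,v> be a critical instance of the Work Assignment Problem, let 0<ε<v, and let G' be the corresponding graph of <J,I,v−ε>. Then for every job i that is critical for <J,I,v> and every interval j with i∈A(j), any minimum (s,t)-cut of G' contains exactly one of the two edges (x_i,y_j) and (y_j,t). -/
open Finset

/-- The nodes of the corresponding graph of a WAP instance: a source `src`,
one node `x i` per job, one node `y j` per interval, and a sink `sink`. -/
inductive Node (n L : ℕ) where
  | src : Node n L
  | x : Fin n → Node n L
  | y : Fin L → Node n L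
  | sink : Node n L
  deriving DecidableEq, Fintype

/-- The capacities of the corresponding graph of the WAP instance `⟨J, I, v⟩`:
`cap src (x i) = w i / v`, `cap (x i) (y j) = |I j|` when `i` is alive in `j`,
`cap (y j) sink = m j * |I j|`, and `0` on all other (non-)edges. -/
noncomputable def cap {n L : ℕ} (w : Fin n → ℝ) (len : Fin L → ℝ) (mj : Fin L → ℕ)
    (Alive : Fin n → Fin L → Bool) (v : ℝ) : Node n L → Node n L → ℝ
  | .src, .x i => w i / v
  | .x i, .y j => if Alive i j then len j else 0
  | .y j, .sink => (mj j : ℝ) * len j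
  | _, _ => 0

section helpers

variable {n L : ℕ} {w : Fin n → ℝ} {len : Fin L → ℝ} {mj : Fin L → ℕ}
  {Alive : Fin n → Fin L → Bool} {v : ℝ}

/-- Lemma A: no "super-assignment" can give the critical job `i` strictly more
than `w i / v` while giving every job at least its share. -/
lemma no_superassignment (hw : ∀ i, 0 < w i) (hlen : ∀ j, 0 < len j)
    (hv : 0 < v) (i : Fin n) (hi : CriticalJob w len mj Alive v i)
    (u : Fin n → Fin L → ℝ)
    (h0 : ∀ k j, 0 ≤ u k j) (hal : ∀ k j, ¬ Alive k j → u k j = 0)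
    (hle : ∀ k j, u k j ≤ len j) (hcol : ∀ j, (∑ k, u k j) ≤ (mj j : ℝ) * len j)
    (hrow : ∀ k, w k / v ≤ ∑ j, u k j) (hstrict : w i / v < ∑ j, u i j) : False := by
  set r : Fin n → ℝ := fun k => ∑ j, u k j with hr
  have hrpos : ∀ k, 0 < r k := fun k => lt_of_lt_of_le (div_pos (hw k) hv) (hrow k)
  set ρ : Fin n → ℝ := fun k => (w k / v) / r k with hρ
  have hρpos : ∀ k, 0 < ρ k := fun k => div_pos (div_pos (hw k) hv) (hrpos k)
  have hρle : ∀ k, ρ k ≤ 1 := fun k => (div_le_one (hrpos k)).2 (hrow k)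
  have hρi : ρ i < 1 := (div_lt_one (hrpos i)).2 hstrict
  set t' : Fin n → Fin L → ℝ := fun k j => ρ k * u k j with ht'
  have ht'le : ∀ k j, t' k j ≤ u k j := by
    intro k j
    calc ρ k * u k j ≤ 1 * u k j := by
          apply mul_le_mul_of_nonneg_right (hρle k) (h0 k j)
    _ = u k j := one_mul _
  have hfeas : WFeasAssign w len mj Alive v t' := by
    refine ⟨fun k j => mul_nonneg (hρpos k).le (h0 k j),
      fun k j h => by simp [ht', hal k j h],
      fun k j => le_trans (ht'le k j) (hle k j), ?_, ?_⟩
    · intro j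
      have h1 : ∑ k ∈ univ.filter (fun k => Alive k j), t' k j ≤ ∑ k, t' k j := by
        apply sum_le_sum_of_subset_of_nonneg (subset_univ _)
        intro k _ _; exact mul_nonneg (hρpos k).le (h0 k j)
      refine le_trans h1 (le_trans (sum_le_sum fun k _ => ht'le k j) (hcol j))
    · intro k
      have h2 : ∑ j ∈ univ.filter (fun j => Alive k j), t' k j = ∑ j, t' k j := by
        rw [sum_filter]
        apply sum_congr rfl
        intro j _
        by_cases h : Alive k j
        · simp [h]
        · simp [h, ht', hal k j h]
      rw [h2]
      have : ∑ j, t' k j = ρ k * r k := by rw [ht', ← mul_sum]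
      rw [this, hρ]
      exact div_mul_cancel₀ _ (ne_of_gt (hrpos k))
  -- now use criticality of i to derive `u i j = 0` for all j
  have huzero : ∀ j, u i j = 0 := by
    intro j
    by_cases haj : Alive i j
    · rcases hi t' hfeas j haj with h | h
      · exfalso
        have : t' i j < len j := by
          calc ρ i * u i j ≤ ρ i * len j := by
                apply mul_le_mul_of_nonneg_left (hle i j) (hρpos i).le
          _ < 1 * len j := by
                apply mul_lt_mul_of_pos_right hρi (hlen j)
          _ = len j := one_mul _
        rw [h] at this; exact lt_irrefl _ this
      · -- full column: ∑ t' = mj*len but ∑ t' ≤ ∑ u ≤ mj*len with slack at i unless u i j = 0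
        have hfil : ∑ k ∈ univ.filter (fun k => Alive k j), t' k j ≤ ∑ k, t' k j := by
          apply sum_le_sum_of_subset_of_nonneg (subset_univ _)
          intro k _ _; exact mul_nonneg (hρpos k).le (h0 k j)
        have hsum : ∑ k, t' k j ≤ ∑ k, u k j := sum_le_sum fun k _ => ht'le k j
        have key : ∑ k, (u k j - t' k j) ≤ 0 := by
          rw [sum_sub_distrib]
          have := hcol j
          rw [← h] at this
          linarith [hfil, this]
        have hterm : ∀ k ∈ (univ : Finset (Fin n)), 0 ≤ u k j - t' k j :=
          fun k _ => sub_nonneg.2 (ht'le k j)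
        have hz : ∀ k ∈ (univ : Finset (Fin n)), u k j - t' k j = 0 := by
          intro k hk
          have hnn := sum_nonneg hterm
          have : ∑ k, (u k j - t' k j) = 0 := le_antisymm key hnn
          exact (sum_eq_zero_iff_of_nonneg hterm).1 this k hk
        have hij : u i j - t' i j = 0 := hz i (mem_univ i)
        have heq : u i j * (1 - ρ i) = u i j - ρ i * u i j := by ring
        have : u i j * (1 - ρ i) = 0 := by rw [heq]; simpa [ht'] using hij
        rcases mul_eq_zero.1 this with h' | h'
        · exact h'
        · exfalso; have : ρ i = 1 := by linarith
          rw [this] at hρi; exact lt_irrefl _ hρi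
    · exact hal i j haj
  have hri : r i = 0 := by rw [hr]; exact sum_eq_zero fun j _ => huzero j
  have := hrpos i
  rw [hri] at this
  exact lt_irrefl _ this

section reach

variable {n L : ℕ} (len : Fin L → ℝ) (Alive : Fin n → Fin L → Bool)
  (t : Fin n → Fin L → ℝ) (i : Fin n)

/-- Simple residual paths from `x i`: `SP node A B` means there is a simple
residual path from job-node `i` to `node`, visiting exactly the jobs in `A`
and the intervals in `B`. -/
inductive SP : (Fin n ⊕ Fin L) → Finset (Fin n) → Finset (Fin L) → Prop where
  | base : SP (Sum.inl i) {i} ∅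
  | stepY {k j A B} : SP (Sum.inl k) A B → Alive k j → t k j < len j → j ∉ B →
      SP (Sum.inr j) A (insert j B)
  | stepX {j k A B} : SP (Sum.inr j) A B → 0 < t k j → k ∉ A →
      SP (Sum.inl k) (insert k A) B

variable {len Alive t i}

lemma SP.mem_i {node A B} (h : SP len Alive t i node A B) : i ∈ A := by
  induction h with
  | base => exact mem_singleton_self i
  | stepY _ _ _ _ ih => exact ih
  | stepX _ _ _ ih => exact mem_insert_of_mem ih

lemma SP.self_mem {node A B} (h : SP len Alive t i node A B) :
    (∀ k, node = Sum.inl k → k ∈ A) ∧ (∀ j, node = Sum.inr j → j ∈ B) := by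
  induction h with
  | base =>
      refine ⟨fun k hk => ?_, fun j hj => by simp at hj⟩
      rw [Sum.inl.injEq] at hk; rw [← hk]; exact mem_singleton_self i
  | stepY _ _ _ _ ih =>
      refine ⟨fun k hk => by simp at hk, fun j' hj' => ?_⟩
      rw [Sum.inr.injEq] at hj'; rw [← hj']; exact mem_insert_self _ _
  | stepX _ _ _ ih =>
      refine ⟨fun k' hk' => ?_, fun j' hj' => by simp at hj'⟩
      rw [Sum.inl.injEq] at hk'; rw [← hk']; exact mem_insert_self _ _

/-- Reachable jobs. -/
def Rx (len : Fin L → ℝ) (Alive : Fin n → Fin L → Bool) (t : Fin n → Fin L → ℝ)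
    (i k : Fin n) : Prop := ∃ A B, SP len Alive t i (Sum.inl k) A B

/-- Reachable intervals. -/
def Ry (len : Fin L → ℝ) (Alive : Fin n → Fin L → Bool) (t : Fin n → Fin L → ℝ)
    (i : Fin n) (j : Fin L) : Prop := ∃ A B, SP len Alive t i (Sum.inr j) A B

lemma SP.mem_reach {node A B} (h : SP len Alive t i node A B) :
    (∀ k ∈ A, Rx len Alive t i k) ∧ (∀ j ∈ B, Ry len Alive t i j) := by
  induction h with
  | base =>
      refine ⟨fun k hk => ?_, fun j hj => by simp at hj⟩
      rw [mem_singleton] at hk; subst hk; exact ⟨_, _, SP.base⟩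
  | stepY hsp hal hlt hjB ih =>
      refine ⟨ih.1, fun j' hj' => ?_⟩
      rcases mem_insert.1 hj' with rfl | hj'
      · exact ⟨_, _, SP.stepY hsp hal hlt hjB⟩
      · exact ih.2 j' hj'
  | stepX hsp hpos hkA ih =>
      refine ⟨fun k' hk' => ?_, ih.2⟩
      rcases mem_insert.1 hk' with rfl | hk'
      · exact ⟨_, _, SP.stepX hsp hpos hkA⟩
      · exact ih.1 k' hk'

lemma Rx.base : Rx len Alive t i i := ⟨_, _, SP.base⟩

lemma Rx.toY {k j} (h : Rx len Alive t i k) (hal : Alive k j) (hlt : t k j < len j) :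
    Ry len Alive t i j := by
  obtain ⟨A, B, hsp⟩ := h
  by_cases hj : j ∈ B
  · exact hsp.mem_reach.2 j hj
  · exact ⟨_, _, SP.stepY hsp hal hlt hj⟩

lemma Ry.toX {j k} (h : Ry len Alive t i j) (hpos : 0 < t k j) :
    Rx len Alive t i k := by
  obtain ⟨A, B, hsp⟩ := h
  by_cases hk : k ∈ A
  · exact hsp.mem_reach.1 k hk
  · exact ⟨_, _, SP.stepX hsp hpos hk⟩


lemma sum_if_pair_row {n L : ℕ} (δ : ℝ) (k k' : Fin n) (j : Fin L) :
    (∑ j' : Fin L, if k' = k ∧ j' = j then δ else 0) = if k' = k then δ else 0 := by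
  by_cases h : k' = k <;> simp [h, Finset.sum_ite_eq']

lemma sum_if_pair_col {n L : ℕ} (δ : ℝ) (k : Fin n) (j j' : Fin L) :
    (∑ k' : Fin n, if k' = k ∧ j' = j then δ else 0) = if j' = j then δ else 0 := by
  by_cases h : j' = j <;> simp [h, Finset.sum_ite_eq']

/-- Augmentation along a simple residual path. -/
lemma SP.augment (h0 : ∀ k j, 0 ≤ t k j) (hal0 : ∀ k j, ¬ Alive k j → t k j = 0)
    (hle : ∀ k j, t k j ≤ len j) :
    ∀ {node A B}, SP len Alive t i node A B → ∀ δ₀ : ℝ, 0 < δ₀ →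
    ∃ δ : ℝ, 0 < δ ∧ δ ≤ δ₀ ∧ ∃ u : Fin n → Fin L → ℝ,
      (∀ k j, 0 ≤ u k j) ∧ (∀ k j, ¬ Alive k j → u k j = 0) ∧
      (∀ k j, u k j ≤ len j) ∧
      (∀ k', k' ∉ A → ∀ j', u k' j' = t k' j') ∧
      (∀ j', j' ∉ B → ∀ k', u k' j' = t k' j') ∧
      (∀ k, node = Sum.inl k →
          (∀ k', (∑ j', u k' j') =
            (∑ j', t k' j') + (if k' = i then δ else 0) - (if k' = k then δ else 0)) ∧
          (∀ j', (∑ k', u k' j') = ∑ k', t k' j')) ∧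
      (∀ j, node = Sum.inr j →
          (∀ k', (∑ j', u k' j') = (∑ j', t k' j') + (if k' = i then δ else 0)) ∧
          (∀ j', (∑ k', u k' j') = (∑ k', t k' j') + (if j' = j then δ else 0))) := by
  intro node A B h
  induction h with
  | base =>
      intro δ₀ hδ₀
      refine ⟨δ₀, hδ₀, le_refl _, t, h0, hal0, hle, fun _ _ _ => rfl, fun _ _ _ => rfl,
        ?_, ?_⟩
      · intro k hk
        rw [Sum.inl.injEq] at hk; subst hk
        exact ⟨fun k' => by by_cases h : k' = i <;> simp [h], fun _ => rfl⟩
      · intro j hj; simp at hj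
  | @stepY k j A B hsp hal hlt hjB ih =>
      intro δ₀ hδ₀
      obtain ⟨δ, hδ, hδle, u, hu0, hual, hule, hrowinv, hcolinv, hmain⟩ :=
        ih (min δ₀ (len j - t k j)) (lt_min hδ₀ (by linarith))
      obtain ⟨hrows, hcols⟩ := hmain.1 k rfl
      have hδ2 : δ ≤ len j - t k j := le_trans hδle (min_le_right _ _)
      have hkA : k ∈ A := hsp.self_mem.1 k rfl
      have hukj : u k j = t k j := hcolinv j hjB k
      refine ⟨δ, hδ, le_trans hδle (min_le_left _ _),
        fun k' j' => u k' j' + if k' = k ∧ j' = j then δ else 0, ?_, ?_, ?_, ?_, ?_, ?_, ?_⟩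
      · intro k' j'
        dsimp only
        by_cases h : k' = k ∧ j' = j
        · rw [if_pos h]; linarith [hu0 k' j']
        · rw [if_neg h, add_zero]; exact hu0 k' j'
      · intro k' j' hna
        dsimp only
        by_cases h : k' = k ∧ j' = j
        · exfalso; rw [h.1, h.2] at hna; exact hna hal
        · rw [if_neg h, add_zero]; exact hual k' j' hna
      · intro k' j'
        dsimp only
        by_cases h : k' = k ∧ j' = j
        · obtain ⟨rfl, rfl⟩ := h
          simp only [and_self, if_true]
          rw [hukj]; linarith
        · rw [if_neg h, add_zero]; exact hule k' j'
      · intro k' hk' j'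
        dsimp only
        have hne : ¬(k' = k ∧ j' = j) := fun hh => hk' (hh.1 ▸ hkA)
        rw [if_neg hne, add_zero]; exact hrowinv k' hk' j'
      · intro j' hj' k'
        dsimp only
        have hne : ¬(k' = k ∧ j' = j) := fun hh => hj' (hh.2 ▸ mem_insert_self j B)
        rw [if_neg hne, add_zero]
        exact hcolinv j' (fun hh => hj' (mem_insert_of_mem hh)) k'
      · intro k' hk'; simp at hk'
      · intro j'' hj''
        rw [Sum.inr.injEq] at hj''; subst hj''
        refine ⟨fun k' => ?_, fun j' => ?_⟩
        · dsimp only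
          rw [Finset.sum_add_distrib, sum_if_pair_row, hrows k']
          by_cases h : k' = k <;> simp [h]
        · dsimp only
          rw [Finset.sum_add_distrib, sum_if_pair_col, hcols j']
  | @stepX j k A B hsp hpos hkA ih =>
      intro δ₀ hδ₀
      obtain ⟨δ, hδ, hδle, u, hu0, hual, hule, hrowinv, hcolinv, hmain⟩ :=
        ih (min δ₀ (t k j)) (lt_min hδ₀ hpos)
      obtain ⟨hrows, hcols⟩ := hmain.2 j rfl
      have hδ2 : δ ≤ t k j := le_trans hδle (min_le_right _ _)
      have hjB : j ∈ B := hsp.self_mem.2 j rfl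
      have hukj : u k j = t k j := hrowinv k hkA j
      have halkj : Alive k j := by
        by_contra hna
        rw [hal0 k j hna] at hpos; exact lt_irrefl _ hpos
      refine ⟨δ, hδ, le_trans hδle (min_le_left _ _),
        fun k' j' => u k' j' - if k' = k ∧ j' = j then δ else 0, ?_, ?_, ?_, ?_, ?_, ?_, ?_⟩
      · intro k' j'
        dsimp only
        by_cases h : k' = k ∧ j' = j
        · obtain ⟨rfl, rfl⟩ := h
          simp only [and_self, if_true]
          rw [hukj]; linarith
        · rw [if_neg h, sub_zero]; exact hu0 k' j'
      · intro k' j' hna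
        dsimp only
        by_cases h : k' = k ∧ j' = j
        · exfalso; rw [h.1, h.2] at hna; exact hna halkj
        · rw [if_neg h, sub_zero]; exact hual k' j' hna
      · intro k' j'
        dsimp only
        by_cases h : k' = k ∧ j' = j
        · rw [if_pos h]; linarith [hule k' j']
        · rw [if_neg h, sub_zero]; exact hule k' j'
      · intro k' hk' j'
        dsimp only
        have hne : ¬(k' = k ∧ j' = j) := fun hh => hk' (hh.1 ▸ mem_insert_self k A)
        rw [if_neg hne, sub_zero]
        exact hrowinv k' (fun hh => hk' (mem_insert_of_mem hh)) j'
      · intro j' hj' k'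
        dsimp only
        have hne : ¬(k' = k ∧ j' = j) := fun hh => hj' (hh.2 ▸ hjB)
        rw [if_neg hne, sub_zero]; exact hcolinv j' hj' k'
      · intro k'' hk''
        rw [Sum.inl.injEq] at hk''; subst hk''
        refine ⟨fun k' => ?_, fun j' => ?_⟩
        · dsimp only
          rw [Finset.sum_sub_distrib, sum_if_pair_row, hrows k']
        · dsimp only
          rw [Finset.sum_sub_distrib, sum_if_pair_col, hcols j']
          by_cases h : j' = j <;> simp [h]
      · intro j'' hj''; simp at hj''

end reach

section cuts

variable {n L : ℕ}

def nodeEquiv (n L : ℕ) : Node n L ≃ (Unit ⊕ Fin n ⊕ Fin L ⊕ Unit) where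
  toFun := fun u => match u with
    | .src => Sum.inl ()
    | .x k => Sum.inr (Sum.inl k)
    | .y j => Sum.inr (Sum.inr (Sum.inl j))
    | .sink => Sum.inr (Sum.inr (Sum.inr ()))
  invFun := fun u => match u with
    | Sum.inl _ => .src
    | Sum.inr (Sum.inl k) => .x k
    | Sum.inr (Sum.inr (Sum.inl j)) => .y j
    | Sum.inr (Sum.inr (Sum.inr _)) => .sink
  left_inv := by intro u; cases u <;> rfl
  right_inv := by rintro (⟨⟩ | k | j | ⟨⟩) <;> rfl

lemma sum_node (f : Node n L → ℝ) :
    ∑ u, f u = f .src + (∑ k, f (.x k)) + (∑ j, f (.y j)) + f .sink := by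
  rw [← Equiv.sum_comp (nodeEquiv n L).symm f, Fintype.sum_sum_type, Fintype.sum_sum_type,
    Fintype.sum_sum_type]
  simp [nodeEquiv]
  ring

lemma sum_indicator {V : Type*} [Fintype V] [DecidableEq V] (s : Finset V) (f : V → ℝ) :
    ∑ x ∈ s, f x = ∑ x : V, if x ∈ s then f x else 0 := by
  rw [Finset.sum_ite_mem, Finset.univ_inter]

variable (w : Fin n → ℝ) (len : Fin L → ℝ) (mj : Fin L → ℕ)
  (Alive : Fin n → Fin L → Bool) (v' : ℝ)

def Sof (X : Finset (Node n L)) : Finset (Fin n) := univ.filter (fun k => Node.x k ∈ X)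
def Tof (X : Finset (Node n L)) : Finset (Fin L) := univ.filter (fun j => Node.y j ∈ X)

noncomputable def alen (k : Fin n) (j : Fin L) : ℝ := if Alive k j then len j else 0

noncomputable def cutVal (S : Finset (Fin n)) (T : Finset (Fin L)) : ℝ :=
  (∑ k ∈ Sᶜ, w k / v') + (∑ k ∈ S, ∑ j ∈ Tᶜ, alen len Alive k j)
    + ∑ j ∈ T, (mj j : ℝ) * len j

lemma cutCap_eq (X : Finset (Node n L)) (hs : Node.src ∈ X) (ht : Node.sink ∉ X) :
    cutCap (cap w len mj Alive v') X = cutVal w len mj Alive v' (Sof X) (Tof X) := by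
  have inner_src : ∑ v ∈ Xᶜ, cap w len mj Alive v' Node.src v
      = ∑ k ∈ (Sof X)ᶜ, w k / v' := by
    rw [sum_indicator, sum_node]
    have h1 : (Sof X)ᶜ = univ.filter (fun k => Node.x k ∉ X) := by
      rw [Sof, Finset.compl_filter]
    rw [h1, Finset.sum_filter]
    simp [cap]
  have inner_x : ∀ k : Fin n, ∑ v ∈ Xᶜ, cap w len mj Alive v' (Node.x k) v
      = ∑ j ∈ (Tof X)ᶜ, alen len Alive k j := by
    intro k
    rw [sum_indicator, sum_node]
    have h1 : (Tof X)ᶜ = univ.filter (fun j => Node.y j ∉ X) := by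
      rw [Tof, Finset.compl_filter]
    rw [h1, Finset.sum_filter]
    simp [cap, alen]
  have inner_y : ∀ j : Fin L, ∑ v ∈ Xᶜ, cap w len mj Alive v' (Node.y j) v
      = (mj j : ℝ) * len j := by
    intro j
    rw [sum_indicator, sum_node]
    simp [cap, ht]
  rw [cutCap, sum_indicator, sum_node]
  rw [if_pos hs, inner_src]
  have hx : ∀ k : Fin n, (if Node.x k ∈ X then ∑ v ∈ Xᶜ, cap w len mj Alive v' (Node.x k) v else 0)
      = if Node.x k ∈ X then ∑ j ∈ (Tof X)ᶜ, alen len Alive k j else 0 := by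
    intro k; by_cases h : Node.x k ∈ X <;> simp [h, inner_x k]
  have hy : ∀ j : Fin L, (if Node.y j ∈ X then ∑ v ∈ Xᶜ, cap w len mj Alive v' (Node.y j) v else 0)
      = if Node.y j ∈ X then (mj j : ℝ) * len j else 0 := by
    intro j; by_cases h : Node.y j ∈ X <;> simp [h, inner_y j]
  rw [Finset.sum_congr rfl (fun k _ => hx k), Finset.sum_congr rfl (fun j _ => hy j)]
  rw [if_neg ht, cutVal, Sof, Tof]
  rw [← Finset.sum_filter, ← Finset.sum_filter]
  ring

/-- Submodularity-type inequality for `cutVal`. -/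
lemma cutVal_submodular (S S₁ : Finset (Fin n)) (T T₁ : Finset (Fin L))
    (hlen : ∀ j, 0 < len j) :
    cutVal w len mj Alive v' (S ∪ S₁) (T ∪ T₁) + cutVal w len mj Alive v' (S ∩ S₁) (T ∩ T₁)
      ≤ cutVal w len mj Alive v' S T + cutVal w len mj Alive v' S₁ T₁ := by
  have hsrc : (∑ k ∈ (S ∪ S₁)ᶜ, w k / v') + ∑ k ∈ (S ∩ S₁)ᶜ, w k / v'
      = (∑ k ∈ Sᶜ, w k / v') + ∑ k ∈ S₁ᶜ, w k / v' := by
    rw [Finset.compl_union, Finset.compl_inter, add_comm]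
    exact Finset.sum_union_inter
  have hsink : (∑ j ∈ T ∪ T₁, (mj j : ℝ) * len j) + ∑ j ∈ T ∩ T₁, (mj j : ℝ) * len j
      = (∑ j ∈ T, (mj j : ℝ) * len j) + ∑ j ∈ T₁, (mj j : ℝ) * len j :=
    Finset.sum_union_inter
  have hmid : (∑ k ∈ S ∪ S₁, ∑ j ∈ (T ∪ T₁)ᶜ, alen len Alive k j)
      + (∑ k ∈ S ∩ S₁, ∑ j ∈ (T ∩ T₁)ᶜ, alen len Alive k j)
      ≤ (∑ k ∈ S, ∑ j ∈ Tᶜ, alen len Alive k j)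
      + (∑ k ∈ S₁, ∑ j ∈ T₁ᶜ, alen len Alive k j) := by
    have key : ∀ (A : Finset (Fin n)) (B : Finset (Fin L)),
        (∑ k ∈ A, ∑ j ∈ Bᶜ, alen len Alive k j)
        = ∑ k : Fin n, ∑ j : Fin L,
            (if k ∈ A then 1 else 0) * (if j ∈ B then 0 else 1) * alen len Alive k j := by
      intro A B
      rw [sum_indicator]
      apply Finset.sum_congr rfl
      intro k _
      by_cases h : k ∈ A
      · rw [if_pos h, sum_indicator]
        apply Finset.sum_congr rfl
        intro j _
        by_cases hj : j ∈ B <;> simp [hj, h]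
      · rw [if_neg h]
        rw [eq_comm]
        apply Finset.sum_eq_zero
        intro j _; simp [h]
    rw [key, key, key, key, ← Finset.sum_add_distrib, ← Finset.sum_add_distrib]
    apply Finset.sum_le_sum
    intro k _
    rw [← Finset.sum_add_distrib, ← Finset.sum_add_distrib]
    apply Finset.sum_le_sum
    intro j _
    have ha : 0 ≤ alen len Alive k j := by
      rw [alen]; by_cases h : Alive k j <;> simp [h, (hlen j).le]
    by_cases h1 : k ∈ S <;> by_cases h2 : k ∈ S₁ <;> by_cases h3 : j ∈ T <;>
      by_cases h4 : j ∈ T₁ <;>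
      simp [h1, h2, h3, h4] <;> nlinarith
  rw [cutVal, cutVal, cutVal, cutVal]
  linarith

end cuts

/-- (Lemma 5, part (i).) Let `⟨J, I, v⟩` be a critical WAP instance, `0 < ε < v`,
and `G'` the corresponding graph of `⟨J, I, v - ε⟩`. For every job `i` critical
for `⟨J, I, v⟩` and every interval `j` with `i` alive in `j`, any minimum
`(s,t)`-cut `X` of `G'` contains exactly one of the two edges `(x i, y j)` and
`(y j, sink)`: exactly one of `x i ∈ X ∧ y j ∉ X` and `y j ∈ X` holds. -/
theorem min_cut_on_critical_job_paths {n L : ℕ} (w : Fin n → ℝ) (len : Fin L → ℝ)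
    (mj : Fin L → ℕ) (Alive : Fin n → Fin L → Bool) (v ε : ℝ)
    (hw : ∀ i, 0 < w i) (hlen : ∀ j, 0 < len j) (hmj : ∀ j, 1 ≤ mj j)
    (hε : 0 < ε) (hεv : ε < v)
    (hcrit : CriticalInstance w len mj Alive v)
    (i : Fin n) (hi : CriticalJob w len mj Alive v i)
    (X : Finset (Node n L))
    (hX : IsMinCut (cap w len mj Alive (v - ε)) X Node.src Node.sink) :
    ∀ j : Fin L, Alive i j →
      ((Node.x i ∈ X ∧ Node.y j ∉ X) ∧ ¬ (Node.y j ∈ X)) ∨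
      (¬ (Node.x i ∈ X ∧ Node.y j ∉ X) ∧ Node.y j ∈ X) := by
  classical
  -- setup
  have hv : 0 < v := hε.trans hεv
  have hv' : 0 < v - ε := by linarith
  obtain ⟨t, ht0, htal, htle, htcol, htrow⟩ := hcrit.1
  have hrow_eq : ∀ k, (∑ j, t k j) = w k / v := by
    intro k
    rw [← htrow k, Finset.sum_filter]
    apply Finset.sum_congr rfl
    intro j _
    by_cases h : Alive k j
    · rw [if_pos h]
    · rw [if_neg h, htal k j h]
  have hcol_le : ∀ j, (∑ k, t k j) ≤ (mj j : ℝ) * len j := by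
    intro j
    refine le_trans (le_of_eq ?_) (htcol j)
    rw [Finset.sum_filter]
    symm
    apply Finset.sum_congr rfl
    intro k _
    by_cases h : Alive k j
    · rw [if_pos h]
    · rw [if_neg h, htal k j h]
  -- Main claim: the job node of the critical job is in every min cut.
  have hmain : Node.x i ∈ X := by
    by_contra hxi
    by_cases hreach : ∃ j₀, Ry len Alive t i j₀ ∧ (∑ k, t k j₀) < (mj j₀ : ℝ) * len j₀
    · -- Case 1: an augmenting path exists; contradiction with criticality of job i.
      obtain ⟨j₀, ⟨A, B, hsp⟩, hslack⟩ := hreach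
      obtain ⟨δ, hδ, hδle, u, hu0, hual, hule, _, _, _, hinr⟩ :=
        hsp.augment ht0 htal htle ((mj j₀ : ℝ) * len j₀ - ∑ k, t k j₀) (by linarith)
      obtain ⟨hrows, hcols⟩ := hinr j₀ rfl
      refine no_superassignment hw hlen hv i hi u hu0 hual hule ?_ ?_ ?_
      · intro j
        rw [hcols j]
        by_cases h : j = j₀
        · subst h; rw [if_pos rfl]; linarith
        · rw [if_neg h, add_zero]; exact hcol_le j
      · intro k
        rw [hrows k, hrow_eq k]
        by_cases h : k = i
        · rw [if_pos h]; linarith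
        · rw [if_neg h, add_zero]
      · rw [hrows i, hrow_eq i, if_pos rfl]; linarith
    · -- Case 2: no augmenting path; build a tight cut and compare with X.
      push_neg at hreach
      set S₁ : Finset (Fin n) := univ.filter (fun k => Rx len Alive t i k) with hS₁
      set T₁ : Finset (Fin L) := univ.filter (fun j => Ry len Alive t i j) with hT₁
      have hiS₁ : i ∈ S₁ := by rw [hS₁]; exact mem_filter.2 ⟨mem_univ i, Rx.base⟩
      have p1 : ∀ k ∈ S₁, ∀ j ∈ T₁ᶜ, t k j = alen len Alive k j := by
        intro k hk j hj
        rw [hS₁, mem_filter] at hk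
        rw [mem_compl, hT₁, mem_filter] at hj
        by_cases h : Alive k j
        · rw [alen, if_pos h]
          rcases lt_or_eq_of_le (htle k j) with hlt | heq
          · exact absurd ⟨mem_univ j, hk.2.toY h hlt⟩ hj
          · exact heq
        · rw [alen, if_neg h]; exact htal k j h
      have p3 : ∀ j ∈ T₁, ∀ k, k ∉ S₁ → t k j = 0 := by
        intro j hj k hk
        rw [hT₁, mem_filter] at hj
        rcases lt_or_eq_of_le (ht0 k j) with hlt | heq
        · exact absurd (mem_filter.2 ⟨mem_univ k, hj.2.toX hlt⟩) hk
        · exact heq.symm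
      have p2 : ∀ j ∈ T₁, (∑ k, t k j) = (mj j : ℝ) * len j := by
        intro j hj
        rw [hT₁, mem_filter] at hj
        exact le_antisymm (hcol_le j) (hreach j hj.2)
      have tight : (∑ k ∈ S₁, w k / v)
          = (∑ k ∈ S₁, ∑ j ∈ T₁ᶜ, alen len Alive k j)
            + ∑ j ∈ T₁, (mj j : ℝ) * len j := by
        have e1 : (∑ k ∈ S₁, w k / v) = ∑ k ∈ S₁, ∑ j, t k j :=
          Finset.sum_congr rfl (fun k _ => (hrow_eq k).symm)
        have e2 : ∀ k, (∑ j, t k j) = (∑ j ∈ T₁, t k j) + ∑ j ∈ T₁ᶜ, t k j :=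
          fun k => (Finset.sum_add_sum_compl T₁ _).symm
        rw [e1, Finset.sum_congr rfl (fun k _ => e2 k), Finset.sum_add_distrib]
        have e3 : (∑ k ∈ S₁, ∑ j ∈ T₁, t k j) = ∑ j ∈ T₁, (mj j : ℝ) * len j := by
          rw [Finset.sum_comm]
          apply Finset.sum_congr rfl
          intro j hj
          rw [← p2 j hj]
          exact Finset.sum_subset (subset_univ S₁) (fun k _ hk => p3 j hj k hk)
        have e4 : (∑ k ∈ S₁, ∑ j ∈ T₁ᶜ, t k j)
            = ∑ k ∈ S₁, ∑ j ∈ T₁ᶜ, alen len Alive k j := by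
          apply Finset.sum_congr rfl
          intro k hk
          exact Finset.sum_congr rfl (fun j hj => p1 k hk j hj)
        rw [e3, e4]
        ring
      -- feasibility inequality for arbitrary cut data
      have feas_ineq : ∀ (A : Finset (Fin n)) (B : Finset (Fin L)),
          (∑ k ∈ A, w k / v) ≤ (∑ k ∈ A, ∑ j ∈ Bᶜ, alen len Alive k j)
            + ∑ j ∈ B, (mj j : ℝ) * len j := by
        intro A B
        have e1 : (∑ k ∈ A, w k / v) = ∑ k ∈ A, ((∑ j ∈ B, t k j) + ∑ j ∈ Bᶜ, t k j) := by
          refine Finset.sum_congr rfl (fun k _ => ?_)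
          rw [Finset.sum_add_sum_compl B, hrow_eq k]
        rw [e1, Finset.sum_add_distrib]
        have e2 : (∑ k ∈ A, ∑ j ∈ B, t k j) ≤ ∑ j ∈ B, (mj j : ℝ) * len j := by
          rw [Finset.sum_comm]
          apply Finset.sum_le_sum
          intro j _
          refine le_trans ?_ (hcol_le j)
          exact Finset.sum_le_sum_of_subset_of_nonneg (subset_univ A)
            (fun k _ _ => ht0 k j)
        have e3 : (∑ k ∈ A, ∑ j ∈ Bᶜ, t k j)
            ≤ ∑ k ∈ A, ∑ j ∈ Bᶜ, alen len Alive k j := by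
          apply Finset.sum_le_sum
          intro k _
          apply Finset.sum_le_sum
          intro j _
          rw [alen]
          by_cases h : Alive k j
          · rw [if_pos h]; exact htle k j
          · rw [if_neg h, htal k j h]
        linarith
      -- cut comparison
      set S : Finset (Fin n) := Sof X with hS
      set T : Finset (Fin L) := Tof X with hT
      have hiS : i ∉ S := by
        rw [hS, Sof, mem_filter]
        exact fun h => hxi h.2
      set N₁ : Finset (Node n L) :=
        insert Node.src ((S₁.image Node.x) ∪ (T₁.image Node.y)) with hN₁
      have hsinkN₁ : Node.sink ∉ N₁ := by
        rw [hN₁]; simp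
      have hSu : Sof (X ∪ N₁) = S ∪ S₁ := by
        ext k
        rw [hS]
        simp [Sof, hN₁]
      have hTu : Tof (X ∪ N₁) = T ∪ T₁ := by
        ext j
        rw [hT]
        simp [Tof, hN₁]
      have hcut1 : IsCut (X ∪ N₁) Node.src Node.sink :=
        ⟨Finset.mem_union_left _ hX.1.1, by
          rw [Finset.mem_union]
          exact fun h => h.elim hX.1.2 hsinkN₁⟩
      have hmin := hX.2 (X ∪ N₁) hcut1
      rw [cutCap_eq w len mj Alive (v - ε) X hX.1.1 hX.1.2,
        cutCap_eq w len mj Alive (v - ε) (X ∪ N₁) hcut1.1 hcut1.2, hSu, hTu] at hmin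
      have hsub := cutVal_submodular w len mj Alive (v - ε) S S₁ T T₁ hlen
      have hkey : cutVal w len mj Alive (v - ε) (S ∩ S₁) (T ∩ T₁)
          ≤ cutVal w len mj Alive (v - ε) S₁ T₁ := by
        rw [hS, hT] at hmin hsub ⊢
        linarith
      -- expand and use tightness + feasibility
      have hcompl : ∀ (A : Finset (Fin n)),
          (∑ k ∈ Aᶜ, w k / (v - ε)) = (∑ k, w k / (v - ε)) - ∑ k ∈ A, w k / (v - ε) := by
        intro A
        rw [eq_sub_iff_add_eq, Finset.sum_compl_add_sum]
      rw [cutVal, cutVal, hcompl, hcompl] at hkey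
      have hfi := feas_ineq (S ∩ S₁) (T ∩ T₁)
      -- per-job strict negativity
      have hφ : ∀ k, w k / v - w k / (v - ε) < 0 := by
        intro k
        have : w k / v < w k / (v - ε) := by
          apply div_lt_div_of_pos_left (hw k) hv'
          linarith
        linarith
      have hsum : (∑ k ∈ S₁, (w k / v - w k / (v - ε)))
          - ∑ k ∈ S ∩ S₁, (w k / v - w k / (v - ε)) ≥ 0 := by
        rw [Finset.sum_sub_distrib, Finset.sum_sub_distrib]
        linarith [tight, hfi, hkey]
      rw [← Finset.sum_sdiff_eq_sub (Finset.inter_subset_right)] at hsum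
      have hiD : i ∈ S₁ \ (S ∩ S₁) := by
        rw [Finset.mem_sdiff]
        exact ⟨hiS₁, fun h => hiS (Finset.mem_inter.1 h).1⟩
      have : (∑ k ∈ S₁ \ (S ∩ S₁), (w k / v - w k / (v - ε))) < 0 := by
        rw [← Finset.add_sum_erase _ _ hiD]
        have h1 : (∑ k ∈ (S₁ \ (S ∩ S₁)).erase i, (w k / v - w k / (v - ε))) ≤ 0 :=
          Finset.sum_nonpos (fun k _ => le_of_lt (hφ k))
        linarith [hφ i]
      linarith
  -- conclude
  intro j _
  by_cases hyj : Node.y j ∈ X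
  · right
    exact ⟨fun h => h.2 hyj, hyj⟩
  · left
    exact ⟨⟨hmain, hyj⟩, hyj⟩
end helpers
end

section
/- (Key invariant behind Theorem 1, the optimality of algorithm BAL, first iteration.) Consider an energy-minimization instance, and regard its jobs and event intervals as a WAP instance with m_j = m processors in every interval. Let v* be the minimum speed v>0 such that the WAP instance <J,I,v> is feasible, and let J_c be the (nonempty) set of jobs critical for <J,I,v*>. Then there exists an optimal feasible solution of the energy-minimization problem in which s_i = v* for every job i ∈ J_c and s_i ≤ v* for every job i ∉ J_c. -/
open Finset

open Finset

/-!
Eliminating the speeds (`s i = w i / T i`, where `T i` is the total time job `i` receives) turns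
the energy into the convex function `∑ i, w i ^ α * T i ^ (1 - α)` of the time table alone. It
attains its minimum on the compact set of schedules whose totals stay above a small floor `ε`,
and every schedule below that floor costs more than the WAP assignment `τ` at `vstar`.

At a minimiser, first-order optimality gives two exchange properties in every interval: a job
with `t i j < |I j|` sees a full interval, and it is no faster than any job with `t k j > 0`.
If the set `S` of jobs faster than `vstar` were nonempty, these would force
`∑ i ∈ S, τ i j ≤ ∑ i ∈ S, t i j` in every interval, whereas every `i ∈ S` gets
`T i < w i / vstar`, the total time `τ` gives it.
Finally, scaling the minimiser down to speed `vstar` gives a WAP assignment below it, and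
criticality forces the two to agree on every critical job.
-/

section

open Filter Topology

lemma sum_filter_lt_le_of_exchange {ι : Type*} (A : Finset ι) {t τ s : ι → ℝ} {c ℓ v : ℝ}
    (hτ_nonneg : ∀ i ∈ A, 0 ≤ τ i) (hτ_le : ∀ i ∈ A, τ i ≤ ℓ) (hτ_sum : ∑ i ∈ A, τ i ≤ c)
    (htight : ∀ i ∈ A, t i < ℓ → ∑ i ∈ A, t i = c)
    (hexchange : ∀ i ∈ A, ∀ k ∈ A, t i < ℓ → 0 < t k → s i ≤ s k) :
    ∑ i ∈ A with v < s i, τ i ≤ ∑ i ∈ A with v < s i, t i := by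
  by_contra! hlt
  obtain ⟨i, hi, hti⟩ := exists_lt_of_sum_lt hlt
  rw [mem_filter] at hi
  have hti_len : t i < ℓ := hti.trans_le (hτ_le i hi.1)
  have hsplit := sum_filter_add_sum_filter_not A (fun i => v < s i) t
  have hsplit' := sum_filter_add_sum_filter_not A (fun i => v < s i) τ
  obtain ⟨k, hk, htk⟩ : ∃ k ∈ A.filter (fun k => ¬ v < s k), τ k < t k := by
    refine exists_lt_of_sum_lt ?_
    linarith [htight i hi.1 hti_len]
  rw [mem_filter] at hk
  have := hexchange i hi.1 k hk.1 hti_len ((hτ_nonneg k hk.1).trans_lt htk)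
  linarith [hi.2, not_lt.1 hk.2]

/-- The tangent line at `y` of the convex function `T ↦ w * (w / T) ^ (α - 1)`, whose derivative
is `-(α - 1) * (w / T) ^ α`. -/
lemma mul_div_rpow_tangent_le {α w x y : ℝ} (hα : 1 ≤ α) (hw : 0 < w) (hx : 0 < x)
    (hy : 0 < y) :
    w * (w / y) ^ (α - 1) - (α - 1) * (w / y) ^ α * (x - y) ≤ w * (w / x) ^ (α - 1) := by
  set r := y / x with hr_def
  have hr : 0 < r := div_pos hy hx
  have bernoulli : 1 + α * (r - 1) ≤ r ^ (α - 1) * r := by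
    rw [← Real.rpow_add_one hr.ne', sub_add_cancel]
    simpa using one_add_mul_self_le_rpow_one_add (s := r - 1) (by linarith) hα
  have key : 1 - (α - 1) * (x / y - 1) ≤ r ^ (α - 1) := by
    rw [show x / y = r⁻¹ by rw [hr_def, inv_div], ← mul_le_mul_iff_of_pos_right hr]
    calc (1 - (α - 1) * (r⁻¹ - 1)) * r = 1 + α * (r - 1) := by field_simp; ring
      _ ≤ _ := bernoulli
  have hsplit : (w / y) ^ α = (w / y) ^ (α - 1) * (w / y) := by
    rw [← Real.rpow_add_one (by positivity), sub_add_cancel]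
  have hxy : w / y * (x - y) = w * (x / y - 1) := by field_simp
  rw [show w / x = w / y * r by rw [hr_def]; field_simp, Real.mul_rpow (by positivity) hr.le,
    hsplit]
  calc w * (w / y) ^ (α - 1) - (α - 1) * ((w / y) ^ (α - 1) * (w / y)) * (x - y)
      = w * (w / y) ^ (α - 1) * (1 - (α - 1) * (x / y - 1)) := by
        linear_combination (-(α - 1) * (w / y) ^ (α - 1)) * hxy
    _ ≤ w * (w / y) ^ (α - 1) * r ^ (α - 1) := by gcongr
    _ = _ := by ring

variable {n : ℕ} {α : ℝ} {w : Fin n → ℝ}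

lemma energy_div_tangent_le (hα : 1 ≤ α) (hw : ∀ i, 0 < w i) {T T' : Fin n → ℝ}
    (hT : ∀ i, 0 < T i) (hT' : ∀ i, 0 < T' i) :
    Energy α w (fun i => w i / T' i) + (α - 1) * ∑ i, (w i / T' i) ^ α * (T' i - T i)
      ≤ Energy α w (fun i => w i / T i) := by
  rw [Energy, Energy, mul_sum, ← sum_add_distrib]
  refine sum_le_sum fun i _ => ?_
  linarith [mul_div_rpow_tangent_le hα (hw i) (hT i) (hT' i)]

lemma energy_div_lt_of_sum_pos (hα : 1 < α) (hw : ∀ i, 0 < w i) {T T' : Fin n → ℝ}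
    (hT : ∀ i, 0 < T i) (hT' : ∀ i, 0 < T' i)
    (hpos : 0 < ∑ i, (w i / T' i) ^ α * (T' i - T i)) :
    Energy α w (fun i => w i / T' i) < Energy α w (fun i => w i / T i) := by
  linarith [energy_div_tangent_le hα.le hw hT hT', mul_pos (sub_pos.2 hα) hpos]

lemma energy_div_add_single_lt (hα : 1 < α) (hw : ∀ i, 0 < w i) {T : Fin n → ℝ}
    (hT : ∀ i, 0 < T i) (i : Fin n) {η : ℝ} (hη : 0 < η) :
    Energy α w (fun a => w a / (T + Pi.single i η : Fin n → ℝ) a) <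
      Energy α w (fun a => w a / T a) := by
  have hT' : ∀ a, 0 < (T + Pi.single i η : Fin n → ℝ) a := fun a => by
    rw [Pi.add_apply, Pi.single_apply]
    split_ifs <;> linarith [hT a]
  refine energy_div_lt_of_sum_pos hα hw hT hT' ?_
  rw [Fintype.sum_eq_single i fun a ha => by simp [ha]]
  simpa using mul_pos (Real.rpow_pos_of_pos (div_pos (hw i) (hT' i)) α) hη

lemma energy_div_transfer_lt (hα : 1 < α) (hw : ∀ i, 0 < w i) {T : Fin n → ℝ}
    (hT : ∀ i, 0 < T i) {i k : Fin n} (hik : i ≠ k) {η : ℝ} (hη : 0 < η) (hηk : η < T k)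
    (hspeed : w k / (T k - η) < w i / (T i + η)) :
    Energy α w (fun a => w a / (T + Pi.single k (-η) + Pi.single i η : Fin n → ℝ) a)
      < Energy α w (fun a => w a / T a) := by
  set T' := T + Pi.single k (-η) + Pi.single i η
  have hT'i : T' i = T i + η := by simp [T', hik]
  have hT'k : T' k = T k - η := by simp [T', hik.symm, sub_eq_add_neg]
  have hT' : ∀ a, 0 < T' a := fun a => by
    simp only [T', Pi.add_apply, Pi.single_apply]
    split_ifs <;> subst_vars <;> linarith [hT a]
  refine energy_div_lt_of_sum_pos hα hw hT hT' ?_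
  rw [Fintype.sum_eq_add i k hik fun a ha => by simp [T', ha.1, ha.2], hT'i, hT'k]
  have := Real.rpow_lt_rpow (z := α) (div_pos (hw k) (by linarith)).le hspeed (by linarith)
  nlinarith

lemma energy_mono (hα : 1 ≤ α) (hw : ∀ i, 0 ≤ w i) {s s' : Fin n → ℝ} (hs : ∀ i, 0 ≤ s i)
    (hss' : ∀ i, s i ≤ s' i) : Energy α w s ≤ Energy α w s' :=
  sum_le_sum fun i _ =>
    mul_le_mul_of_nonneg_left (Real.rpow_le_rpow (hs i) (hss' i) (by linarith)) (hw i)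

lemma mul_rpow_le_energy (hw : ∀ i, 0 ≤ w i) {s : Fin n → ℝ} (hs : ∀ i, 0 ≤ s i)
    (i : Fin n) : w i * s i ^ (α - 1) ≤ Energy α w s :=
  single_le_sum (f := fun i => w i * s i ^ (α - 1))
    (fun j _ => mul_nonneg (hw j) (Real.rpow_nonneg (hs j) _)) (mem_univ i)

variable {L m : ℕ} {len : Fin L → ℝ} {Alive : Fin n → Fin L → Bool}

def totalTime (Alive : Fin n → Fin L → Bool) (t : Fin n → Fin L → ℝ) (i : Fin n) : ℝ :=
  ∑ j ∈ univ.filter (fun j => Alive i j), t i j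

def intervalLoad (Alive : Fin n → Fin L → Bool) (t : Fin n → Fin L → ℝ) (j : Fin L) : ℝ :=
  ∑ i ∈ univ.filter (fun i => Alive i j), t i j

def intervalCapacity (m : ℕ) (len : Fin L → ℝ) (Alive : Fin n → Fin L → Bool) (j : Fin L) :
    ℝ :=
  ((min m (univ.filter (fun i => Alive i j)).card : ℕ) : ℝ) * len j

structure IsSchedule (m : ℕ) (len : Fin L → ℝ) (Alive : Fin n → Fin L → Bool)
    (t : Fin n → Fin L → ℝ) : Prop where
  nonneg : ∀ i j, 0 ≤ t i j
  eq_zero_of_not_alive : ∀ i j, ¬ Alive i j → t i j = 0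
  le_len : ∀ i j, t i j ≤ len j
  load_le : ∀ j, intervalLoad Alive t j ≤ intervalCapacity m len Alive j

noncomputable def inducedSpeed (w : Fin n → ℝ) (Alive : Fin n → Fin L → Bool)
    (t : Fin n → Fin L → ℝ) : Fin n → ℝ :=
  fun i => w i / totalTime Alive t i

variable {t : Fin n → Fin L → ℝ}

lemma intervalCapacity_le (j : Fin L) (hlen : 0 ≤ len j) :
    intervalCapacity m len Alive j ≤ m * len j :=
  mul_le_mul_of_nonneg_right (Nat.cast_le.2 (min_le_left _ _)) hlen

lemma WFeasAssign.isSchedule {v : ℝ} (h : WFeasAssign w len (fun _ => m) Alive v t) :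
    IsSchedule m len Alive t where
  nonneg := h.1
  eq_zero_of_not_alive := h.2.1
  le_len := h.2.2.1
  load_le j := by
    have hcard : intervalLoad Alive t j ≤ (univ.filter (fun i => Alive i j)).card * len j :=
      (sum_le_card_nsmul _ _ _ fun i _ => h.2.2.1 i j).trans_eq (nsmul_eq_mul _ _)
    rcases min_choice m (univ.filter (fun i => Alive i j)).card with hmin | hmin <;>
      simp only [intervalCapacity, hmin]
    exacts [h.2.2.2.1 j, hcard]

lemma EFeasible.isSchedule {s : Fin n → ℝ} (h : EFeasible m w len Alive s t) :
    IsSchedule m len Alive t :=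
  ⟨h.2.1, h.2.2.1, h.2.2.2.2.2, h.2.2.2.2.1⟩

lemma EFeasible.totalTime_pos (hw : ∀ i, 0 < w i) {s : Fin n → ℝ}
    (h : EFeasible m w len Alive s t) (i : Fin n) : 0 < totalTime Alive t i :=
  (div_pos (hw i) (h.1 i)).trans_le (h.2.2.2.1 i)

lemma IsSchedule.eFeasible (ht : IsSchedule m len Alive t) (hw : ∀ i, 0 < w i)
    (hT : ∀ i, 0 < totalTime Alive t i) : EFeasible m w len Alive (inducedSpeed w Alive t) t :=
  ⟨fun i => div_pos (hw i) (hT i), ht.nonneg, ht.eq_zero_of_not_alive,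
    fun i => (div_div_cancel₀ (hw i).ne').le, ht.load_le, ht.le_len⟩

lemma energy_inducedSpeed_le (hα : 1 ≤ α) (hw : ∀ i, 0 < w i) {s : Fin n → ℝ}
    (h : EFeasible m w len Alive s t) : Energy α w (inducedSpeed w Alive t) ≤ Energy α w s :=
  energy_mono hα (fun i => (hw i).le) (fun i => (div_pos (hw i) (h.totalTime_pos hw i)).le)
    fun i => (div_le_comm₀ (h.1 i) (h.totalTime_pos hw i)).1 (h.2.2.2.1 i)

lemma sum_totalTime_filter (h0 : ∀ i j, ¬ Alive i j → t i j = 0) (p : Fin n → Prop)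
    [DecidablePred p] :
    ∑ i ∈ univ.filter p, totalTime Alive t i =
      ∑ j, ∑ i ∈ univ.filter (fun i => Alive i j) with p i, t i j := by
  have hrow : ∀ i, totalTime Alive t i = ∑ j, t i j := fun i =>
    sum_filter_of_ne fun j _ hj => by_contra fun h => hj (h0 i j h)
  have hcol : ∀ j, ∑ i ∈ univ.filter (fun i => Alive i j) with p i, t i j =
      ∑ i ∈ univ.filter p, t i j := fun j => by
    rw [filter_comm]
    exact sum_filter_of_ne fun i _ hi => by_contra fun h => hi (h0 i j h)
  simp only [hrow, hcol]
  exact sum_comm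

lemma add_single_apply (t : Fin n → Fin L → ℝ) (i : Fin n) (j : Fin L) (η : ℝ) (a : Fin n)
    (b : Fin L) :
    (t + Pi.single i (Pi.single j η) : Fin n → Fin L → ℝ) a b =
      t a b + if a = i ∧ b = j then η else 0 := by
  rcases eq_or_ne a i with rfl | ha
  · rcases eq_or_ne b j with rfl | hb <;> simp [*]
  · simp [ha]

lemma totalTime_add_single {i : Fin n} {j : Fin L} (hij : Alive i j) (η : ℝ) :
    totalTime Alive (t + Pi.single i (Pi.single j η : Fin L → ℝ)) =
      totalTime Alive t + Pi.single i η := by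
  ext a
  simp only [totalTime, add_single_apply, sum_add_distrib, Pi.add_apply]
  rcases eq_or_ne a i with rfl | ha
  · simp [hij]
  · simp [ha]

lemma intervalLoad_add_single {i : Fin n} {j : Fin L} (hij : Alive i j) (η : ℝ) :
    intervalLoad Alive (t + Pi.single i (Pi.single j η : Fin L → ℝ)) =
      intervalLoad Alive t + Pi.single j η := by
  ext b
  simp only [intervalLoad, add_single_apply, sum_add_distrib, Pi.add_apply]
  rcases eq_or_ne b j with rfl | hb
  · simp [hij]
  · simp [hb]

lemma IsSchedule.add_single (ht : IsSchedule m len Alive t) {i : Fin n} {j : Fin L} {η : ℝ}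
    (hij : Alive i j) (h0 : 0 ≤ t i j + η) (hlen : t i j + η ≤ len j)
    (hload : intervalLoad Alive t j + η ≤ intervalCapacity m len Alive j) :
    IsSchedule m len Alive (t + Pi.single i (Pi.single j η : Fin L → ℝ)) where
  nonneg a b := by
    rw [add_single_apply]
    split_ifs with h
    · obtain ⟨rfl, rfl⟩ := h; exact h0
    · simpa using ht.nonneg a b
  eq_zero_of_not_alive a b hab := by
    rw [add_single_apply, if_neg (by rintro ⟨rfl, rfl⟩; exact hab hij), add_zero]
    exact ht.eq_zero_of_not_alive a b hab
  le_len a b := by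
    rw [add_single_apply]
    split_ifs with h
    · obtain ⟨rfl, rfl⟩ := h; exact hlen
    · simpa using ht.le_len a b
  load_le b := by
    rw [intervalLoad_add_single hij, Pi.add_apply]
    rcases eq_or_ne b j with rfl | hb
    · simpa using hload
    · simpa [hb] using ht.load_le b

lemma IsSchedule.wFeasAssign_mul (ht : IsSchedule m len Alive t) (hlen : ∀ j, 0 ≤ len j)
    {v : ℝ} {c : Fin n → ℝ} (hc₀ : ∀ i, 0 ≤ c i) (hc₁ : ∀ i, c i ≤ 1)
    (hc : ∀ i, totalTime Alive t i * c i = w i / v) :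
    WFeasAssign w len (fun _ => m) Alive v (fun i j => t i j * c i) :=
  ⟨fun i j => mul_nonneg (ht.nonneg i j) (hc₀ i),
    fun i j h => by simp [ht.eq_zero_of_not_alive i j h],
    fun i j => (mul_le_of_le_one_right (ht.nonneg i j) (hc₁ i)).trans (ht.le_len i j),
    fun j => (sum_le_sum fun i _ => mul_le_of_le_one_right (ht.nonneg i j) (hc₁ i)).trans
      ((ht.load_le j).trans (intervalCapacity_le j (hlen j))),
    fun i => by rw [← sum_mul]; exact hc i⟩

lemma CriticalJob.apply_eq_of_le {mj : Fin L → ℕ} {v : ℝ} {τ : Fin n → Fin L → ℝ} {i : Fin n}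
    (hi : CriticalJob w len mj Alive v i) (hτ : WFeasAssign w len mj Alive v τ)
    (hle : ∀ a b, τ a b ≤ t a b) (hlen : ∀ a b, t a b ≤ len b)
    (hload : ∀ b, intervalLoad Alive t b ≤ mj b * len b) {j : Fin L} (hij : Alive i j) :
    τ i j = t i j := by
  rcases hi τ hτ j hij with hfull | hfull
  · exact le_antisymm (hle i j) (hfull ▸ hlen i j)
  · have hsum : ∑ a ∈ univ.filter (fun a => Alive a j), (t a j - τ a j) = 0 := by
      have hload_j := hload j
      rw [intervalLoad] at hload_j
      rw [sum_sub_distrib, hfull]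
      linarith [sum_le_sum fun a (_ : a ∈ univ.filter (fun a => Alive a j)) => hle a j]
    have := (sum_eq_zero_iff_of_nonneg fun a _ => sub_nonneg.2 (hle a j)).1 hsum i
      (by simp [hij])
    linarith

lemma CriticalJob.totalTime_eq_of_le {mj : Fin L → ℕ} {v : ℝ} {τ : Fin n → Fin L → ℝ}
    {i : Fin n} (hi : CriticalJob w len mj Alive v i) (hτ : WFeasAssign w len mj Alive v τ)
    (hle : ∀ a b, τ a b ≤ t a b) (hlen : ∀ a b, t a b ≤ len b)
    (hload : ∀ b, intervalLoad Alive t b ≤ mj b * len b) :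
    totalTime Alive t i = w i / v := by
  rw [← hτ.2.2.2.2 i]
  exact (sum_congr rfl fun j hj => hi.apply_eq_of_le hτ hle hlen hload (mem_filter.1 hj).2).symm

structure IsOptimalSchedule (m : ℕ) (α : ℝ) (w : Fin n → ℝ) (len : Fin L → ℝ)
    (Alive : Fin n → Fin L → Bool) (t : Fin n → Fin L → ℝ) : Prop where
  isSchedule : IsSchedule m len Alive t
  totalTime_pos : ∀ i, 0 < totalTime Alive t i
  energy_le : ∀ t', IsSchedule m len Alive t' → (∀ i, 0 < totalTime Alive t' i) →
    Energy α w (inducedSpeed w Alive t) ≤ Energy α w (inducedSpeed w Alive t')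

lemma isClosed_setOf_isSchedule :
    IsClosed {t : Fin n → Fin L → ℝ | IsSchedule m len Alive t} := by
  have hset : {t : Fin n → Fin L → ℝ | IsSchedule m len Alive t} =
      {t | (∀ i j, 0 ≤ t i j) ∧ (∀ i j, ¬ Alive i j → t i j = 0) ∧ (∀ i j, t i j ≤ len j) ∧
        ∀ j, intervalLoad Alive t j ≤ intervalCapacity m len Alive j} := by
    ext t
    exact ⟨fun ⟨h₁, h₂, h₃, h₄⟩ => ⟨h₁, h₂, h₃, h₄⟩, fun ⟨h₁, h₂, h₃, h₄⟩ => ⟨h₁, h₂, h₃, h₄⟩⟩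
  have hcont : ∀ i j, Continuous fun t : Fin n → Fin L → ℝ => t i j := by fun_prop
  simp only [hset, Set.ofPred_and, Set.ofPred_forall]
  refine .inter ?_ (.inter ?_ (.inter ?_ ?_)) <;> refine isClosed_iInter fun i => ?_
  · exact isClosed_iInter fun j => isClosed_le continuous_const (hcont i j)
  · exact isClosed_iInter fun j => isClosed_iInter fun _ =>
      isClosed_eq (hcont i j) continuous_const
  · exact isClosed_iInter fun j => isClosed_le (hcont i j) continuous_const
  · exact isClosed_le (continuous_finsetSum _ fun a _ => hcont a i) continuous_const

def floorSet (m : ℕ) (len : Fin L → ℝ) (Alive : Fin n → Fin L → Bool) (ε : ℝ) :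
    Set (Fin n → Fin L → ℝ) :=
  {t | IsSchedule m len Alive t ∧ ∀ i, ε ≤ totalTime Alive t i}

lemma isCompact_floorSet (ε : ℝ) : IsCompact (floorSet m len Alive ε) := by
  refine (isCompact_univ_pi fun _ => isCompact_univ_pi fun j => isCompact_Icc (a := 0)
    (b := len j)).of_isClosed_subset ?_ fun t ht => ?_
  · rw [floorSet, Set.ofPred_and, Set.ofPred_forall]
    exact isClosed_setOf_isSchedule.inter (isClosed_iInter fun i =>
      isClosed_le continuous_const (continuous_finsetSum _ fun j _ => by fun_prop))
  · simp only [Set.mem_pi, Set.mem_univ, forall_const]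
    exact fun i j => ⟨ht.1.nonneg i j, ht.1.le_len i j⟩

lemma continuousOn_energy_inducedSpeed (hα : 1 ≤ α) {s : Set (Fin n → Fin L → ℝ)}
    (hs : ∀ t ∈ s, ∀ i, totalTime Alive t i ≠ 0) :
    ContinuousOn (fun t => Energy α w (inducedSpeed w Alive t)) s := by
  have hT : ∀ i, Continuous fun t : Fin n → Fin L → ℝ => totalTime Alive t i := fun i =>
    continuous_finsetSum _ fun j _ => by fun_prop
  refine continuousOn_finsetSum _ fun i _ => continuousOn_const.mul ?_
  exact (continuousOn_const.div (hT i).continuousOn fun t ht => hs t ht i).rpow_const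
    fun _ _ => Or.inr (by linarith)

lemma exists_energy_floor (hα : 1 < α) (hw : ∀ i, 0 < w i) (E : ℝ) {c : Fin n → ℝ}
    (hc : ∀ i, 0 < c i) : ∃ ε, 0 < ε ∧ ∀ i, ε ≤ c i ∧ E < w i * (w i / ε) ^ (α - 1) := by
  have hlarge : ∀ i, ∀ᶠ ε in 𝓝[>] (0 : ℝ), E < w i * (w i / ε) ^ (α - 1) := fun i => by
    have hdiv : Tendsto (fun ε : ℝ => w i / ε) (𝓝[>] 0) atTop := by
      simpa only [div_eq_mul_inv] using tendsto_inv_nhdsGT_zero.const_mul_atTop (hw i)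
    exact (((tendsto_rpow_atTop (by linarith)).comp hdiv).const_mul_atTop
      (hw i)).eventually_gt_atTop E
  have hsmall : ∀ i, ∀ᶠ ε in 𝓝[>] (0 : ℝ), ε ≤ c i := fun i =>
    (eventually_le_nhds (hc i)).filter_mono nhdsWithin_le_nhds
  have hpos : ∀ᶠ ε in 𝓝[>] (0 : ℝ), 0 < ε := self_mem_nhdsWithin
  exact (hpos.and (eventually_all.2 fun i => (hsmall i).and (hlarge i))).exists

theorem exists_isOptimalSchedule (hα : 1 < α) (hw : ∀ i, 0 < w i) {τ : Fin n → Fin L → ℝ}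
    (hτ : IsSchedule m len Alive τ) (hτ_pos : ∀ i, 0 < totalTime Alive τ i) :
    ∃ t, IsOptimalSchedule m α w len Alive t := by
  obtain ⟨ε, hε, hεc⟩ := exists_energy_floor hα hw (Energy α w (inducedSpeed w Alive τ)) hτ_pos
  obtain ⟨t, ht, hmin⟩ := (isCompact_floorSet ε).exists_isMinOn ⟨τ, hτ, fun i => (hεc i).1⟩
    (continuousOn_energy_inducedSpeed hα.le fun t ht i => (hε.trans_le (ht.2 i)).ne')
  refine ⟨t, ht.1, fun i => hε.trans_le (ht.2 i), fun t' ht' hpos => ?_⟩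
  by_cases hfloor : ∀ i, ε ≤ totalTime Alive t' i
  · exact hmin ⟨ht', hfloor⟩
  obtain ⟨i, hi⟩ : ∃ i, totalTime Alive t' i < ε := by simpa using hfloor
  refine le_of_lt ?_
  calc Energy α w (inducedSpeed w Alive t)
      ≤ Energy α w (inducedSpeed w Alive τ) := hmin ⟨hτ, fun i => (hεc i).1⟩
    _ < w i * (w i / ε) ^ (α - 1) := (hεc i).2
    _ ≤ w i * inducedSpeed w Alive t' i ^ (α - 1) := by
      have hwi := hw i
      gcongr
      exact div_le_div_of_nonneg_left hwi.le (hpos i) hi.le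
    _ ≤ Energy α w (inducedSpeed w Alive t') :=
      mul_rpow_le_energy (fun i => (hw i).le) (fun i => (div_pos (hw i) (hpos i)).le) i

namespace IsOptimalSchedule

variable (ht : IsOptimalSchedule m α w len Alive t) (hα : 1 < α) (hw : ∀ i, 0 < w i)
include ht hα hw

lemma intervalLoad_eq {i : Fin n} {j : Fin L} (hij : Alive i j) (hlt : t i j < len j) :
    intervalLoad Alive t j = intervalCapacity m len Alive j := by
  by_contra hne
  have hslack := lt_of_le_of_ne (ht.isSchedule.load_le j) hne
  set η := min (len j - t i j) (intervalCapacity m len Alive j - intervalLoad Alive t j)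
  have hη : 0 < η := lt_min (sub_pos.2 hlt) (sub_pos.2 hslack)
  have hη_len : η ≤ len j - t i j := min_le_left _ _
  have hη_load : η ≤ intervalCapacity m len Alive j - intervalLoad Alive t j := min_le_right _ _
  have hsched := ht.isSchedule.add_single hij (η := η)
    (by linarith [ht.isSchedule.nonneg i j]) (by linarith) (by linarith)
  have hT := totalTime_add_single (t := t) hij η
  have hT_pos : ∀ a, 0 < totalTime Alive (t + Pi.single i (Pi.single j η)) a := fun a => by
    rw [hT, Pi.add_apply, Pi.single_apply]
    split_ifs <;> linarith [ht.totalTime_pos a]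
  refine (ht.energy_le _ hsched hT_pos).not_gt ?_
  unfold inducedSpeed
  rw [hT]
  exact energy_div_add_single_lt hα hw ht.totalTime_pos i hη

lemma inducedSpeed_le_of_transfer {i k : Fin n} {j : Fin L} (hij : Alive i j)
    (hkj : Alive k j) (hlt : t i j < len j) (hpos : 0 < t k j) :
    inducedSpeed w Alive t i ≤ inducedSpeed w Alive t k := by
  by_contra! hki
  have hik : i ≠ k := by rintro rfl; exact hki.false
  set T := totalTime Alive t
  have hT : ∀ a, 0 < T a := ht.totalTime_pos
  obtain ⟨η, ⟨hη_speed, hη_len, hη_k, hη_T⟩, hη⟩ : ∃ η, (w k / (T k - η) < w i / (T i + η) ∧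
      η < len j - t i j ∧ η < t k j ∧ η < T k) ∧ 0 < η := by
    have hspeed : ∀ᶠ η in 𝓝 (0 : ℝ), w k / (T k - η) < w i / (T i + η) :=
      ContinuousAt.eventually_lt (by fun_prop (disch := simp [(hT k).ne']))
        (by fun_prop (disch := simp [(hT i).ne'])) (by simpa [T, inducedSpeed] using hki)
    have hη_pos : ∀ᶠ η in 𝓝[>] (0 : ℝ), 0 < η := self_mem_nhdsWithin
    exact ((hspeed.and ((eventually_lt_nhds (sub_pos.2 hlt)).and ((eventually_lt_nhds hpos).and
      (eventually_lt_nhds (hT k))))).filter_mono nhdsWithin_le_nhds).and hη_pos |>.exists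
  -- Removing time from `k` first keeps the load of interval `j` within capacity throughout.
  set t₁ := t + Pi.single k (Pi.single j (-η))
  have hs₁ : IsSchedule m len Alive t₁ := ht.isSchedule.add_single hkj (by linarith)
    (by linarith [ht.isSchedule.le_len k j]) (by linarith [ht.isSchedule.load_le j])
  have ht₁ : t₁ i j = t i j := by simp [t₁, add_single_apply, hik]
  have hs₂ : IsSchedule m len Alive (t₁ + Pi.single i (Pi.single j η)) := hs₁.add_single hij
    (by rw [ht₁]; linarith [ht.isSchedule.nonneg i j]) (by rw [ht₁]; linarith)
    (by simpa [t₁, intervalLoad_add_single hkj] using ht.isSchedule.load_le j)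
  have hT₂ : totalTime Alive (t₁ + Pi.single i (Pi.single j η)) =
      T + Pi.single k (-η) + Pi.single i η := by
    rw [totalTime_add_single hij, totalTime_add_single hkj]
  have hlower := energy_div_transfer_lt hα hw hT hik hη hη_T hη_speed
  refine (ht.energy_le _ hs₂ fun a => ?_).not_gt ?_
  · rw [hT₂, Pi.add_apply, Pi.add_apply, Pi.single_apply, Pi.single_apply]
    split_ifs <;> subst_vars <;> linarith [hT a]
  · unfold inducedSpeed
    rw [hT₂]
    exact hlower

lemma inducedSpeed_le {v : ℝ} (hv : 0 < v) {τ : Fin n → Fin L → ℝ}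
    (hτ : WFeasAssign w len (fun _ => m) Alive v τ) (i : Fin n) :
    inducedSpeed w Alive t i ≤ v := by
  by_contra! hi
  set S := univ.filter fun a => v < inducedSpeed w Alive t a
  have hτs := hτ.isSchedule
  have hlt : ∑ a ∈ S, totalTime Alive t a < ∑ a ∈ S, totalTime Alive τ a := by
    refine sum_lt_sum_of_nonempty ⟨i, by simpa [S] using hi⟩ fun a ha => ?_
    rw [mem_filter] at ha
    rw [show totalTime Alive τ a = w a / v from hτ.2.2.2.2 a]
    exact (lt_div_iff₀ hv).2 ((lt_div_iff₀' (ht.totalTime_pos a)).1 ha.2)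
  refine hlt.not_ge ?_
  rw [sum_totalTime_filter hτs.eq_zero_of_not_alive,
    sum_totalTime_filter ht.isSchedule.eq_zero_of_not_alive]
  refine sum_le_sum fun j _ => sum_filter_lt_le_of_exchange _ (fun a _ => hτs.nonneg a j)
    (fun a _ => hτs.le_len a j) (hτs.load_le j)
    (fun a ha hlt => ht.intervalLoad_eq hα hw (mem_filter.1 ha).2 hlt)
    fun a ha k hk hlt hpos =>
      ht.inducedSpeed_le_of_transfer hα hw (mem_filter.1 ha).2 (mem_filter.1 hk).2 hlt hpos

lemma inducedSpeed_eq_of_critical (hlen : ∀ j, 0 ≤ len j) {v : ℝ} (hv : 0 < v)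
    {τ : Fin n → Fin L → ℝ} (hτ : WFeasAssign w len (fun _ => m) Alive v τ) {i : Fin n}
    (hi : CriticalJob w len (fun _ => m) Alive v i) : inducedSpeed w Alive t i = v := by
  have hT := ht.totalTime_pos
  have hc₁ : ∀ a, w a / v / totalTime Alive t a ≤ 1 := fun a =>
    (div_le_one (hT a)).2 ((div_le_comm₀ (hT a) hv).1 (ht.inducedSpeed_le hα hw hv hτ a))
  have hscaled := ht.isSchedule.wFeasAssign_mul hlen
    (fun a => (div_pos (div_pos (hw a) hv) (hT a)).le) hc₁ fun a => mul_div_cancel₀ _ (hT a).ne'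
  have hTi := hi.totalTime_eq_of_le hscaled
    (fun a b => mul_le_of_le_one_right (ht.isSchedule.nonneg a b) (hc₁ a))
    ht.isSchedule.le_len fun b => (ht.isSchedule.load_le b).trans (intervalCapacity_le b (hlen b))
  rw [inducedSpeed, hTi, div_div_cancel₀ (hw i).ne']

end IsOptimalSchedule

end

theorem bal_first_iteration_invariant_general {n L : ℕ} (m : ℕ) (α : ℝ)
    (w : Fin n → ℝ) (len : Fin L → ℝ) (Alive : Fin n → Fin L → Bool) (vstar : ℝ)
    (hα : 1 < α) (hw : ∀ i, 0 < w i) (hlen : ∀ j, 0 < len j)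
    (hv : 0 < vstar)
    (hfeas : WFeasible w len (fun _ => m) Alive vstar) :
    ∃ (s : Fin n → ℝ) (t : Fin n → Fin L → ℝ),
      EFeasible m w len Alive s t ∧
      (∀ s' t', EFeasible m w len Alive s' t' → Energy α w s ≤ Energy α w s') ∧
      (∀ i, CriticalJob w len (fun _ => m) Alive vstar i → s i = vstar) ∧
      (∀ i, ¬ CriticalJob w len (fun _ => m) Alive vstar i → s i ≤ vstar) := by
  obtain ⟨τ, hτ⟩ := hfeas
  have hτ_pos : ∀ i, 0 < totalTime Alive τ i := fun i =>
    (div_pos (hw i) hv).trans_eq (hτ.2.2.2.2 i).symm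
  obtain ⟨t, ht⟩ := exists_isOptimalSchedule hα hw hτ.isSchedule hτ_pos
  refine ⟨inducedSpeed w Alive t, t, ht.isSchedule.eFeasible hw ht.totalTime_pos,
    fun s' t' h' => ?_, fun i hi => ?_, fun i _ => ht.inducedSpeed_le hα hw hv hτ i⟩
  · exact (ht.energy_le t' h'.isSchedule (h'.totalTime_pos hw)).trans
      (energy_inducedSpeed_le hα.le hw h')
  · exact ht.inducedSpeed_eq_of_critical hα hw (fun j => (hlen j).le) hv hτ hi

/-- (Key invariant behind Theorem 1: first iteration of BAL.) View the
energy-minimization instance as a WAP instance with `m` processors in every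
interval. Let `vstar` be the minimum speed `v > 0` for which the WAP instance
`⟨J, I, v⟩` is feasible. Then there is an optimal feasible solution of the
energy-minimization problem in which every job critical for `⟨J, I, vstar⟩` has
speed exactly `vstar` and every non-critical job has speed at most `vstar`. -/
theorem bal_first_iteration_invariant {n L : ℕ} (m : ℕ) (α : ℝ)
    (w : Fin n → ℝ) (len : Fin L → ℝ) (Alive : Fin n → Fin L → Bool) (vstar : ℝ)
    (hm : 1 ≤ m) (hα : 1 < α) (hw : ∀ i, 0 < w i) (hlen : ∀ j, 0 < len j)
    (hv : 0 < vstar)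
    (hfeas : WFeasible w len (fun _ => m) Alive vstar)
    (hmin : ∀ v : ℝ, 0 < v → WFeasible w len (fun _ => m) Alive v → vstar ≤ v) :
    ∃ (s : Fin n → ℝ) (t : Fin n → Fin L → ℝ),
      EFeasible m w len Alive s t ∧
      (∀ s' t', EFeasible m w len Alive s' t' → Energy α w s ≤ Energy α w s') ∧
      (∀ i, CriticalJob w len (fun _ => m) Alive vstar i → s i = vstar) ∧
      (∀ i, ¬ CriticalJob w len (fun _ => m) Alive vstar i → s i ≤ vstar) :=
  bal_first_iteration_invariant_general m α w len Alive vstar hα hw hlen hv hfeas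
end
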